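/- arXiv:1804.08164 — 6 statements merged into one kernel-verified Lean document; each statement's English description precedes it below -/
import Mathlib

section
/- Let 0 < k < n, let F_• and E_• be transverse complete flags in ℂⁿ, and let λ and μ be partitions fitting in the k×(n−k) rectangle with |λ| + |μ| = k(n−k). Then the intersection Ω_λ(F_•) ∩ Ω_μ(E_•) has exactly one element if λ and μ are complementary, i.e. λ_i + μ_{k+1−i} = n−k for all i = 1,…,k, and is empty otherwise. -/
/-- A complete flag in `ℂⁿ`. -/
def IsCompleteFlag (n : ℕ) (F : ℕ → Submodule ℂ (Fin n → ℂ)) : Prop :=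
  Monotone F ∧ (∀ i, i ≤ n → Module.finrank ℂ (F i) = i) ∧ F n = ⊤

/-- Transverse flags: `dim (F i ⊓ E j) = max 0 (i + j - n)`. -/
def TransverseFlags (n : ℕ) (F E : ℕ → Submodule ℂ (Fin n → ℂ)) : Prop :=
  ∀ i j, i ≤ n → j ≤ n → Module.finrank ℂ ↥(F i ⊓ E j) = i + j - n

/-- A partition fitting in the `k × (n-k)` rectangle, as a function `Fin k → ℕ`
(0-based indexing: `lam ⟨0⟩` is `λ₁`). -/
def FitsRectangle (n k : ℕ) (lam : Fin k → ℕ) : Prop :=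
  Antitone lam ∧ ∀ i, lam i ≤ n - k

/-- The Schubert variety `Ω_λ(F_•)` in the Grassmannian `Gr(n,k)`:
all `k`-dimensional subspaces `V` with `dim (V ⊓ F (n-k+i-λᵢ)) ≥ i` for `i = 1, …, k`
(here `i : Fin k` is 0-based, so the mathematical `i` is `i.val + 1`). -/
def SchubertVariety (n k : ℕ) (lam : Fin k → ℕ) (F : ℕ → Submodule ℂ (Fin n → ℂ)) :
    Set (Submodule ℂ (Fin n → ℂ)) :=
  {V | Module.finrank ℂ V = k ∧
    ∀ i : Fin k, i.val + 1 ≤ Module.finrank ℂ ↥(V ⊓ F (n - k + (i.val + 1) - lam i))}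

namespace DualityAux
open Module Submodule


def idx (n k : ℕ) (lam : Fin k → ℕ) (i : Fin k) : ℕ := n - k + (i.val + 1) - lam i

lemma idx_eq {n k : ℕ} {lam : Fin k → ℕ} (h : ∀ i, lam i ≤ n - k) (i : Fin k) :
    idx n k lam i + lam i = n - k + (i.val + 1) := by
  have := h i; unfold idx; omega

lemma idx_le {n k : ℕ} (hkn : k ≤ n) (lam : Fin k → ℕ) (i : Fin k) : idx n k lam i ≤ n := by
  have := i.isLt; unfold idx; omega

lemma rev_val_add {k : ℕ} (i : Fin k) : i.rev.val + 1 = k - i.val := by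
  have := i.isLt; have := Fin.val_rev i; omega

noncomputable def line (n k : ℕ) (lam mu : Fin k → ℕ)
    (F E : ℕ → Submodule ℂ (Fin n → ℂ)) (i : Fin k) : Submodule ℂ (Fin n → ℂ) :=
  F (idx n k lam i) ⊓ E (idx n k mu i.rev)

noncomputable def dualRep (n k : ℕ) (lam mu : Fin k → ℕ)
    (F E : ℕ → Submodule ℂ (Fin n → ℂ)) : Submodule ℂ (Fin n → ℂ) :=
  Finset.univ.sup (line n k lam mu F E)

lemma line_swap {n k : ℕ} (lam mu : Fin k → ℕ) (F E : ℕ → Submodule ℂ (Fin n → ℂ)) (i : Fin k) :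
    line n k mu lam E F i = line n k lam mu F E i.rev := by
  unfold line
  rw [Fin.rev_rev, inf_comm]

lemma dualRep_swap {n k : ℕ} (lam mu : Fin k → ℕ) (F E : ℕ → Submodule ℂ (Fin n → ℂ)) :
    dualRep n k mu lam E F = dualRep n k lam mu F E := by
  unfold dualRep
  apply le_antisymm
  · refine Finset.sup_le fun j _ => ?_
    rw [line_swap]
    exact Finset.le_sup (Finset.mem_univ j.rev)
  · refine Finset.sup_le fun j _ => ?_
    rw [line_swap mu lam E F j]
    exact Finset.le_sup (Finset.mem_univ j.rev)

lemma idx_strictMono {n k : ℕ} {lam : Fin k → ℕ} (hanti : Antitone lam)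
    (h : ∀ i, lam i ≤ n - k) {i j : Fin k} (hij : i.val < j.val) :
    idx n k lam i < idx n k lam j := by
  have h1 := idx_eq h i
  have h2 := idx_eq h j
  have h3 : lam j ≤ lam i := hanti (by exact_mod_cast hij.le : i ≤ j)
  omega

lemma idx_mono {n k : ℕ} {lam : Fin k → ℕ} (hanti : Antitone lam)
    (h : ∀ i, lam i ≤ n - k) {i j : Fin k} (hij : i.val ≤ j.val) :
    idx n k lam i ≤ idx n k lam j := by
  have h1 := idx_eq h i
  have h2 := idx_eq h j
  have h3 : lam j ≤ lam i := hanti (by exact_mod_cast hij : i ≤ j)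
  omega

lemma idx_add {n k : ℕ} (hkn : k ≤ n) {lam mu : Fin k → ℕ}
    (hlam : FitsRectangle n k lam) (hmu : FitsRectangle n k mu)
    (hcomp : ∀ i j : Fin k, i.val + j.val + 1 = k → lam i + mu j = n - k) (i : Fin k) :
    idx n k lam i + idx n k mu i.rev = n + 1 := by
  have h1 := idx_eq hlam.2 i
  have h2 := idx_eq hmu.2 i.rev
  have h3 := rev_val_add i
  have h4 := i.isLt
  have h5 : lam i + mu i.rev = n - k := by apply hcomp; omega
  omega

lemma line_finrank {n k : ℕ} (hkn : k < n) {F E : ℕ → Submodule ℂ (Fin n → ℂ)}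
    (hFE : TransverseFlags n F E) {lam mu : Fin k → ℕ}
    (hlam : FitsRectangle n k lam) (hmu : FitsRectangle n k mu)
    (hcomp : ∀ i j : Fin k, i.val + j.val + 1 = k → lam i + mu j = n - k) (i : Fin k) :
    finrank ℂ ↥(line n k lam mu F E i) = 1 := by
  unfold line
  rw [hFE _ _ (idx_le hkn.le lam i) (idx_le hkn.le mu i.rev)]
  have := idx_add hkn.le hlam hmu hcomp i
  omega

noncomputable def pSup (n k : ℕ) (lam mu : Fin k → ℕ)
    (F E : ℕ → Submodule ℂ (Fin n → ℂ)) (m : ℕ) : Submodule ℂ (Fin n → ℂ) :=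
  (Finset.univ.filter fun i : Fin k => i.val < m).sup (line n k lam mu F E)

lemma pSup_le_F {n k : ℕ} {F E : ℕ → Submodule ℂ (Fin n → ℂ)} (hF : IsCompleteFlag n F)
    {lam mu : Fin k → ℕ} (hlam : FitsRectangle n k lam) (m : ℕ) (hm : m < k) :
    pSup n k lam mu F E m ≤ F (idx n k lam ⟨m, hm⟩ - 1) := by
  refine Finset.sup_le fun j hj => ?_
  rw [Finset.mem_filter] at hj
  have hlt : idx n k lam j < idx n k lam ⟨m, hm⟩ := idx_strictMono hlam.1 hlam.2 hj.2
  refine le_trans inf_le_left (hF.1 ?_)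
  omega

lemma pSup_succ {n k : ℕ} {F E : ℕ → Submodule ℂ (Fin n → ℂ)} {lam mu : Fin k → ℕ}
    (m : ℕ) (hm : m < k) :
    pSup n k lam mu F E (m + 1) = line n k lam mu F E ⟨m, hm⟩ ⊔ pSup n k lam mu F E m := by
  unfold pSup
  have : (Finset.univ.filter fun i : Fin k => i.val < m + 1)
      = insert ⟨m, hm⟩ (Finset.univ.filter fun i : Fin k => i.val < m) := by
    ext j
    simp only [Finset.mem_filter, Finset.mem_insert, Finset.mem_univ, true_and]
    constructor
    · intro h
      rcases Nat.lt_succ_iff_lt_or_eq.mp h with h | h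
      · exact Or.inr h
      · exact Or.inl (Fin.ext h)
    · rintro (h | h)
      · subst h; exact Nat.lt_succ_self m
      · omega
  rw [this, Finset.sup_insert]

lemma pSup_finrank {n k : ℕ} (hkn : k < n) {F E : ℕ → Submodule ℂ (Fin n → ℂ)}
    (hF : IsCompleteFlag n F) (hFE : TransverseFlags n F E) {lam mu : Fin k → ℕ}
    (hlam : FitsRectangle n k lam) (hmu : FitsRectangle n k mu)
    (hcomp : ∀ i j : Fin k, i.val + j.val + 1 = k → lam i + mu j = n - k) :
    ∀ m, m ≤ k → finrank ℂ ↥(pSup n k lam mu F E m) = m := by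
  intro m
  induction m with
  | zero =>
    intro _
    have h0 : pSup n k lam mu F E 0 = ⊥ := by
      unfold pSup
      have : (Finset.univ.filter fun i : Fin k => i.val < 0) = ∅ := by ext j; simp
      rw [this, Finset.sup_empty]
    rw [h0]
    exact finrank_bot ℂ _
  | succ m ih =>
    intro hm1
    have hm : m < k := hm1
    rw [pSup_succ m hm]
    set L := line n k lam mu F E ⟨m, hm⟩ with hL
    set S := pSup n k lam mu F E m with hS
    have hkey := Submodule.finrank_sup_add_finrank_inf_eq L S
    have hLr : finrank ℂ ↥L = 1 := line_finrank hkn hFE hlam hmu hcomp _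
    have hSr : finrank ℂ ↥S = m := ih hm.le
    have hinf : finrank ℂ ↥(L ⊓ S) = 0 := by
      have hle : L ⊓ S ≤ F (idx n k lam ⟨m, hm⟩ - 1) ⊓ E (idx n k mu (Fin.rev ⟨m, hm⟩)) := by
        refine le_inf ?_ ?_
        · exact le_trans inf_le_right (pSup_le_F hF hlam m hm)
        · exact le_trans inf_le_left inf_le_right
      have hrk := Submodule.finrank_mono (M := Fin n → ℂ) hle
      have hidx := idx_add hkn.le hlam hmu hcomp ⟨m, hm⟩
      have h1 : idx n k lam ⟨m, hm⟩ - 1 ≤ n := by omega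
      rw [hFE _ _ h1 (idx_le hkn.le mu _)] at hrk
      have h2 := idx_eq hlam.2 (⟨m, hm⟩ : Fin k)
      have h3 := hlam.2 (⟨m, hm⟩ : Fin k)
      omega
    omega

lemma pSup_top {n k : ℕ} {F E : ℕ → Submodule ℂ (Fin n → ℂ)} {lam mu : Fin k → ℕ} :
    pSup n k lam mu F E k = dualRep n k lam mu F E := by
  unfold pSup dualRep
  congr 1
  ext j
  simp only [Finset.mem_filter, Finset.mem_univ, true_and, iff_true]
  exact j.isLt

/-- `dualRep` lies in the Schubert variety of `F` and has dimension `k`. -/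
lemma dualRep_mem {n k : ℕ} (hkn : k < n) {F E : ℕ → Submodule ℂ (Fin n → ℂ)}
    (hF : IsCompleteFlag n F) (hFE : TransverseFlags n F E) {lam mu : Fin k → ℕ}
    (hlam : FitsRectangle n k lam) (hmu : FitsRectangle n k mu)
    (hcomp : ∀ i j : Fin k, i.val + j.val + 1 = k → lam i + mu j = n - k) :
    finrank ℂ ↥(dualRep n k lam mu F E) = k ∧
      dualRep n k lam mu F E ∈ SchubertVariety n k lam F := by
  have hrk : finrank ℂ ↥(dualRep n k lam mu F E) = k := by
    rw [← pSup_top]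
    exact pSup_finrank hkn hF hFE hlam hmu hcomp k le_rfl
  refine ⟨hrk, hrk, fun i => ?_⟩
  have h1 : pSup n k lam mu F E (i.val + 1) ≤ dualRep n k lam mu F E := by
    rw [← pSup_top]
    refine Finset.sup_mono fun j hj => ?_
    simp only [Finset.mem_filter, Finset.mem_univ, true_and] at *
    exact j.isLt
  have h2 : pSup n k lam mu F E (i.val + 1) ≤ F (n - k + (i.val + 1) - lam i) := by
    refine Finset.sup_le fun j hj => ?_
    rw [Finset.mem_filter] at hj
    have : idx n k lam j ≤ idx n k lam i := idx_mono hlam.1 hlam.2 (by omega)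
    exact le_trans inf_le_left (hF.1 this)
  have h3 : pSup n k lam mu F E (i.val + 1) ≤
      dualRep n k lam mu F E ⊓ F (n - k + (i.val + 1) - lam i) := le_inf h1 h2
  have h4 := Submodule.finrank_mono (M := Fin n → ℂ) h3
  rw [pSup_finrank hkn hF hFE hlam hmu hcomp (i.val + 1) i.isLt] at h4
  exact h4


/-- For `V` in both Schubert varieties, `V ⊓ F(aᵢ) ⊓ E(b(rev i))` is nonzero. -/
lemma inf_one {n k : ℕ} {F E : ℕ → Submodule ℂ (Fin n → ℂ)}
    {lam mu : Fin k → ℕ} {V : Submodule ℂ (Fin n → ℂ)}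
    (hV : V ∈ SchubertVariety n k lam F) (hV' : V ∈ SchubertVariety n k mu E) (i : Fin k) :
    1 ≤ finrank ℂ ↥(V ⊓ (F (idx n k lam i) ⊓ E (idx n k mu i.rev))) := by
  obtain ⟨hVk, hVF⟩ := hV
  obtain ⟨_, hVE⟩ := hV'
  set A := V ⊓ F (idx n k lam i) with hAdef
  set B := V ⊓ E (idx n k mu i.rev) with hBdef
  have hA : i.val + 1 ≤ finrank ℂ ↥A := hVF i
  have hB : i.rev.val + 1 ≤ finrank ℂ ↥B := hVE i.rev
  have hsup : finrank ℂ ↥(A ⊔ B) ≤ k := by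
    rw [← hVk]
    exact Submodule.finrank_mono (sup_le inf_le_left inf_le_left)
  have hkey := Submodule.finrank_sup_add_finrank_inf_eq A B
  have hinf : A ⊓ B = V ⊓ (F (idx n k lam i) ⊓ E (idx n k mu i.rev)) := by
    rw [hAdef, hBdef, ← inf_inf_distrib_left]
  rw [hinf] at hkey
  have h1 := rev_val_add i
  have h2 := i.isLt
  omega

lemma term_le {n k : ℕ} (hkn : k < n) {F E : ℕ → Submodule ℂ (Fin n → ℂ)}
    (hFE : TransverseFlags n F E)
    {lam mu : Fin k → ℕ} (hlam : ∀ i, lam i ≤ n - k) (hmu : ∀ i, mu i ≤ n - k)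
    {V : Submodule ℂ (Fin n → ℂ)}
    (hV : V ∈ SchubertVariety n k lam F) (hV' : V ∈ SchubertVariety n k mu E) (i : Fin k) :
    n + 1 ≤ idx n k lam i + idx n k mu i.rev := by
  have h1 := inf_one hV hV' i
  have h2 : finrank ℂ ↥(V ⊓ (F (idx n k lam i) ⊓ E (idx n k mu i.rev)))
      ≤ finrank ℂ ↥(F (idx n k lam i) ⊓ E (idx n k mu i.rev)) :=
    Submodule.finrank_mono inf_le_right
  rw [hFE _ _ (idx_le hkn.le lam i) (idx_le hkn.le mu i.rev)] at h2
  omega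

lemma comp_of_mem {n k : ℕ} (hkn : k < n) {F E : ℕ → Submodule ℂ (Fin n → ℂ)}
    (hFE : TransverseFlags n F E)
    {lam mu : Fin k → ℕ} (hlam : ∀ i, lam i ≤ n - k) (hmu : ∀ i, mu i ≤ n - k)
    (hsize : (∑ i, lam i) + (∑ i, mu i) = k * (n - k))
    {V : Submodule ℂ (Fin n → ℂ)}
    (hV : V ∈ SchubertVariety n k lam F) (hV' : V ∈ SchubertVariety n k mu E) :
    ∀ i j : Fin k, i.val + j.val + 1 = k → lam i + mu j = n - k := by
  have hterm : ∀ i : Fin k, lam i + mu i.rev ≤ n - k := by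
    intro i
    have := term_le hkn hFE hlam hmu hV hV' i
    have e1 := idx_eq hlam i
    have e2 := idx_eq hmu i.rev
    have e3 := rev_val_add i
    have := i.isLt
    omega
  have hsum : ∑ i : Fin k, (lam i + mu i.rev) = k * (n - k) := by
    rw [Finset.sum_add_distrib]
    have : ∑ i : Fin k, mu i.rev = ∑ i : Fin k, mu i :=
      Equiv.sum_comp Fin.revPerm mu
    rw [this, hsize]
  have heach : ∀ i : Fin k, lam i + mu i.rev = n - k := by
    by_contra h
    push_neg at h
    obtain ⟨i₀, hi₀⟩ := h
    have hlt : ∑ i : Fin k, (lam i + mu i.rev) < ∑ _i : Fin k, (n - k) := by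
      refine Finset.sum_lt_sum (fun i _ => hterm i) ⟨i₀, Finset.mem_univ _, ?_⟩
      exact lt_of_le_of_ne (hterm i₀) hi₀
    rw [hsum, Finset.sum_const, Finset.card_univ, Fintype.card_fin, smul_eq_mul] at hlt
    omega
  intro i j hij
  have : j = i.rev := by
    apply Fin.ext
    have := Fin.val_rev i
    omega
  rw [this]
  exact heach i


end DualityAux

open Module Submodule in
/-- Duality theorem: for transverse flags and partitions `λ, μ` in the `k × (n-k)` rectangle with
`|λ| + |μ| = k(n-k)`, the intersection `Ω_λ(F_•) ∩ Ω_μ(E_•)` has exactly one element if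
`λᵢ + μ_{k+1-i} = n - k` for all `i`, and is empty otherwise. -/
theorem duality_theorem (n k : ℕ) (hk : 0 < k) (hkn : k < n)
    (F E : ℕ → Submodule ℂ (Fin n → ℂ))
    (hF : IsCompleteFlag n F) (hE : IsCompleteFlag n E)
    (hFE : TransverseFlags n F E)
    (lam mu : Fin k → ℕ) (hlam : FitsRectangle n k lam) (hmu : FitsRectangle n k mu)
    (hsize : (∑ i, lam i) + (∑ i, mu i) = k * (n - k)) :
    ((∀ i j : Fin k, i.val + j.val + 1 = k → lam i + mu j = n - k) →
      ∃! V, V ∈ SchubertVariety n k lam F ∩ SchubertVariety n k mu E) ∧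
    (¬ (∀ i j : Fin k, i.val + j.val + 1 = k → lam i + mu j = n - k) →
      SchubertVariety n k lam F ∩ SchubertVariety n k mu E = ∅) := by
  classical
  constructor
  · intro hcomp
    obtain ⟨hrkF, hmemF⟩ := DualityAux.dualRep_mem hkn hF hFE hlam hmu hcomp
    have hcomp' : ∀ i j : Fin k, i.val + j.val + 1 = k → mu i + lam j = n - k := by
      intro i j h
      have := hcomp j i (by omega)
      omega
    have hFE' : TransverseFlags n E F := by
      intro i j hi hj
      rw [inf_comm, hFE j i hj hi]
      omega
    obtain ⟨_, hmemE⟩ := DualityAux.dualRep_mem hkn hE hFE' hmu hlam hcomp'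
    rw [DualityAux.dualRep_swap] at hmemE
    refine ⟨DualityAux.dualRep n k lam mu F E, ⟨hmemF, hmemE⟩, ?_⟩
    rintro V ⟨hV1, hV2⟩
    have hline : ∀ i : Fin k, DualityAux.line n k lam mu F E i ≤ V := by
      intro i
      have h1 := DualityAux.inf_one hV1 hV2 i
      have h2 : Module.finrank ℂ ↥(DualityAux.line n k lam mu F E i) = 1 :=
        DualityAux.line_finrank hkn hFE hlam hmu hcomp i
      have h3 : V ⊓ DualityAux.line n k lam mu F E i = DualityAux.line n k lam mu F E i := by
        apply Submodule.eq_of_le_of_finrank_le inf_le_right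
        rw [h2]
        exact h1
      rw [← h3]
      exact inf_le_left
    have hle : DualityAux.dualRep n k lam mu F E ≤ V :=
      Finset.sup_le fun i _ => hline i
    refine (Submodule.eq_of_le_of_finrank_le hle ?_).symm
    rw [hV1.1, hrkF]
  · intro hncomp
    rw [Set.eq_empty_iff_forall_notMem]
    rintro V ⟨hV1, hV2⟩
    exact hncomp (DualityAux.comp_of_mem hkn hFE hlam.2 hmu.2 hsize hV1 hV2)
end

section
/- Let 0 < k < n, let F_• and E_• be transverse complete flags in ℂⁿ, and let λ and μ be partitions fitting in the k×(n−k) rectangle. If there exists an index i with 1 ≤ i ≤ k such that λ_i + μ_{k+1−i} > n−k, then Ω_λ(F_•) ∩ Ω_μ(E_•) = ∅. -/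
/-- If `λᵢ + μ_{k+1-i} > n - k` for some `i`, then `Ω_λ(F_•) ∩ Ω_μ(E_•) = ∅`
for transverse flags `F_•, E_•`. -/
theorem schubert_intersection_empty (n k : ℕ) (hk : 0 < k) (hkn : k < n)
    (F E : ℕ → Submodule ℂ (Fin n → ℂ))
    (hF : IsCompleteFlag n F) (hE : IsCompleteFlag n E)
    (hFE : TransverseFlags n F E)
    (lam mu : Fin k → ℕ) (hlam : FitsRectangle n k lam) (hmu : FitsRectangle n k mu)
    (hbig : ∃ i j : Fin k, i.val + j.val + 1 = k ∧ lam i + mu j > n - k) :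
    SchubertVariety n k lam F ∩ SchubertVariety n k mu E = ∅ := by
  ext V
  simp only [Set.mem_inter_iff, Set.mem_empty_iff_false, iff_false]
  rintro ⟨⟨hVk, hVF⟩, hVk', hVE⟩
  obtain ⟨i, j, hij, hgt⟩ := hbig
  have hik := i.isLt
  have hjk := j.isLt
  set a := n - k + (i.val + 1) - lam i with ha
  set b := n - k + (j.val + 1) - mu j with hb
  have hla := hlam.2 i
  have hmb := hmu.2 j
  have han : a ≤ n := by omega
  have hbn : b ≤ n := by omega
  have h0 : Module.finrank ℂ ↥(F a ⊓ E b) = 0 := by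
    rw [hFE a b han hbn]; omega
  have hX := hVF i
  have hY := hVE j
  rw [← ha] at hX
  rw [← hb] at hY
  have hXY : (V ⊓ F a) ⊓ (V ⊓ E b) ≤ F a ⊓ E b :=
    inf_le_inf inf_le_right inf_le_right
  have hsup : Module.finrank ℂ ↥((V ⊓ F a) ⊔ (V ⊓ E b)) ≤ k := by
    rw [← hVk]
    exact Submodule.finrank_mono (sup_le inf_le_left inf_le_left)
  have heq := Submodule.finrank_sup_add_finrank_inf_eq (V ⊓ F a) (V ⊓ E b)
  have hle : Module.finrank ℂ ↥((V ⊓ F a) ⊓ (V ⊓ E b)) ≤ 0 := by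
    rw [← h0]
    exact Submodule.finrank_mono hXY
  omega
end

section
/- Let 0 < k < n, let u_1,…,u_n be the standard basis of ℂⁿ, let F_• be the standard flag with F_q = span(u_{n−q+1},…,u_n) and E_• the opposite flag with E_q = span(u_1,…,u_q). If λ and μ are complementary partitions in the k×(n−k) rectangle (λ_i + μ_{k+1−i} = n−k for all i), then Ω_λ(F_•) ∩ Ω_μ(E_•) consists of exactly the single subspace V = span{ u_{λ_i + k + 1 − i} : i = 1,…,k }. -/
/-- The standard basis vector `u_j` of `ℂⁿ` (0-based: `u j = e_{j+1}` in 1-based notation). -/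
noncomputable def stdBasisVec (n : ℕ) (j : Fin n) : Fin n → ℂ := Pi.single j 1

/-- The standard flag: `F q = span(u_{n-q+1}, …, u_n)` (1-based), i.e. the span of the
standard basis vectors with 0-based index `≥ n - q`. -/
noncomputable def stdFlag (n q : ℕ) : Submodule ℂ (Fin n → ℂ) :=
  Submodule.span ℂ (stdBasisVec n '' {j : Fin n | n - q ≤ j.val})

/-- The opposite flag: `E q = span(u_1, …, u_q)` (1-based), i.e. the span of the
standard basis vectors with 0-based index `< q`. -/
noncomputable def oppFlag (n q : ℕ) : Submodule ℂ (Fin n → ℂ) :=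
  Submodule.span ℂ (stdBasisVec n '' {j : Fin n | j.val < q})

/-- The coordinate subspace of `ℂⁿ` supported on a set `S` of indices. -/
noncomputable def coordSub (n : ℕ) (S : Set (Fin n)) : Submodule ℂ (Fin n → ℂ) where
  carrier := {x | ∀ j ∉ S, x j = 0}
  add_mem' := by intro a b ha hb j hj; simp [ha j hj, hb j hj]
  zero_mem' := by intro j _; rfl
  smul_mem' := by intro c x hx j hj; simp [hx j hj]

lemma mem_coordSub {n : ℕ} {S : Set (Fin n)} {x : Fin n → ℂ} :
    x ∈ coordSub n S ↔ ∀ j ∉ S, x j = 0 := Iff.rfl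

lemma span_image_eq (n : ℕ) (S : Set (Fin n)) :
    Submodule.span ℂ (stdBasisVec n '' S) = coordSub n S := by
  apply le_antisymm
  · rw [Submodule.span_le]
    rintro _ ⟨j, hj, rfl⟩ l hl
    exact Pi.single_eq_of_ne (fun h : l = j => hl (h ▸ hj)) 1
  · intro x hx
    have hxe : x = ∑ j : Fin n, x j • stdBasisVec n j := by
      rw [← Finset.univ_sum_single x]
      refine Finset.sum_congr rfl fun j _ => ?_
      simp [stdBasisVec, ← Pi.single_smul]
    rw [hxe]
    refine Submodule.sum_mem _ fun j _ => ?_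
    by_cases hj : j ∈ S
    · exact Submodule.smul_mem _ _ (Submodule.subset_span ⟨j, hj, rfl⟩)
    · rw [hx j hj, zero_smul]; exact (Submodule.span ℂ _).zero_mem

lemma finrank_coordSub (n : ℕ) (S : Set (Fin n)) :
    Module.finrank ℂ (coordSub n S) = S.ncard := by
  classical
  rw [← span_image_eq]
  have hb : LinearIndependent ℂ (fun j : S => stdBasisVec n j) := by
    have h2 : (fun j : S => stdBasisVec n j) = (Pi.basisFun ℂ (Fin n)) ∘ (Subtype.val) := by
      funext j; simp [stdBasisVec]
    rw [h2]
    exact (Pi.basisFun ℂ (Fin n)).linearIndependent.comp _ Subtype.val_injective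
  have h3 := finrank_span_eq_card hb
  rw [← Set.image_eq_range] at h3
  rw [h3, ← Nat.card_coe_set_eq, Nat.card_eq_fintype_card]

lemma coordSub_mono {n : ℕ} {S T : Set (Fin n)} (h : S ⊆ T) : coordSub n S ≤ coordSub n T :=
  fun _ hx j hj => hx j (fun hS => hj (h hS))

lemma coordSub_inf {n : ℕ} (S T : Set (Fin n)) :
    coordSub n S ⊓ coordSub n T = coordSub n (S ∩ T) := by
  ext x
  simp only [Submodule.mem_inf, mem_coordSub, Set.mem_inter_iff]
  constructor
  · rintro ⟨hS, hT⟩ j hj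
    by_cases h : j ∈ S
    · exact hT j (fun ht => hj ⟨h, ht⟩)
    · exact hS j h
  · intro h
    exact ⟨fun j hj => h j (fun hh => hj hh.1), fun j hj => h j (fun hh => hj hh.2)⟩

lemma le_finrank_coordSub {n m : ℕ} (f : Fin m → Fin n) (hf : Function.Injective f)
    (T : Set (Fin n)) (hT : ∀ x, f x ∈ T) : m ≤ Module.finrank ℂ (coordSub n T) := by
  have h1 : coordSub n (Set.range f) ≤ coordSub n T :=
    coordSub_mono (Set.range_subset_iff.2 hT)
  have h2 : (Set.range f).ncard = m := by
    rw [← Nat.card_coe_set_eq, Nat.card_range_of_injective hf, Nat.card_eq_fintype_card,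
      Fintype.card_fin]
  calc m = Module.finrank ℂ (coordSub n (Set.range f)) := by rw [finrank_coordSub, h2]
    _ ≤ _ := Submodule.finrank_mono h1

/-- For complementary partitions `λ, μ` in the `k × (n-k)` rectangle, the intersection of the
Schubert varieties for the standard and opposite flags is exactly the single subspace
`V = span{u_{λᵢ + k + 1 - i} : i = 1, …, k}` (with 1-based index `λᵢ + k + 1 - i`, i.e.
0-based index `lam i + (k - 1 - i.val)`). -/
theorem duality_unique_point (n k : ℕ) (hk : 0 < k) (hkn : k < n)
    (lam mu : Fin k → ℕ) (hlam : FitsRectangle n k lam) (hmu : FitsRectangle n k mu)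
    (hcomp : ∀ i j : Fin k, i.val + j.val + 1 = k → lam i + mu j = n - k) :
    SchubertVariety n k lam (stdFlag n) ∩ SchubertVariety n k mu (oppFlag n) =
      {Submodule.span ℂ
        (stdBasisVec n '' {j : Fin n | ∃ i : Fin k, j.val = lam i + (k - 1 - i.val)})} := by
  obtain ⟨hlam_anti, hlam_le⟩ := hlam
  obtain ⟨hmu_anti, hmu_le⟩ := hmu
  set S₀ : Set (Fin n) := {j : Fin n | ∃ i : Fin k, j.val = lam i + (k - 1 - i.val)} with hS₀def
  have haval : ∀ i : Fin k, lam i + (k - 1 - i.val) < n := fun i => by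
    have := hlam_le i; have := i.2; omega
  set a : Fin k → Fin n := fun i => ⟨lam i + (k - 1 - i.val), haval i⟩ with ha_def
  have ha_val : ∀ i : Fin k, (a i).val = lam i + (k - 1 - i.val) := fun i => rfl
  have ha_anti : ∀ i i' : Fin k, i ≤ i' → (a i').val ≤ (a i).val := by
    intro i i' h
    have h1 := hlam_anti h
    have h2 := i.2; have h3 := i'.2
    have h4 : i.val ≤ i'.val := h
    rw [ha_val, ha_val]; omega
  have ha_strict : ∀ i i' : Fin k, i.val < i'.val → (a i').val < (a i).val := by
    intro i i' h
    have h1 := hlam_anti (le_of_lt (Fin.lt_def.2 h))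
    have h3 := i'.2
    rw [ha_val, ha_val]; omega
  have ha_inj : Function.Injective a := by
    intro i i' h
    have hv : (a i).val = (a i').val := congrArg Fin.val h
    by_contra hne
    have hne' : i.val ≠ i'.val := fun hh => hne (Fin.ext hh)
    rcases Nat.lt_or_ge i.val i'.val with hlt | hge
    · have := ha_strict i i' hlt; omega
    · have := ha_strict i' i (by omega); omega
  have hS₀a : S₀ = Set.range a := by
    ext j
    simp only [hS₀def, Set.mem_setOf_eq, Set.mem_range]
    constructor
    · rintro ⟨i, hi⟩; exact ⟨i, Fin.ext (by rw [ha_val]; omega)⟩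
    · rintro ⟨i, rfl⟩; exact ⟨i, (ha_val i)⟩
  have hrk0 : Module.finrank ℂ (coordSub n S₀) = k := by
    rw [finrank_coordSub, hS₀a, ← Nat.card_coe_set_eq,
      Nat.card_range_of_injective ha_inj, Nat.card_eq_fintype_card, Fintype.card_fin]
  have hstd : ∀ q, stdFlag n q = coordSub n {l : Fin n | n - q ≤ l.val} := fun q =>
    span_image_eq n _
  have hopp : ∀ q, oppFlag n q = coordSub n {l : Fin n | l.val < q} := fun q =>
    span_image_eq n _
  ext V
  simp only [Set.mem_inter_iff, Set.mem_singleton_iff]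
  rw [span_image_eq]
  constructor
  · rintro ⟨⟨hVrk, hVF⟩, ⟨-, hVE⟩⟩
    -- key: each basis vector u_{a i} lies in V
    have key : ∀ i : Fin k, stdBasisVec n (a i) ∈ V := by
      intro i
      have hik : i.val < k := i.2
      have hli := hlam_le i
      set j : Fin k := ⟨k - 1 - i.val, by omega⟩ with hj_def
      have hjval : j.val = k - 1 - i.val := rfl
      have hcij := hcomp i j (by rw [hjval]; omega)
      have hF := hVF i
      have hE := hVE j
      rw [hstd] at hF
      rw [hopp] at hE
      have e1 : {l : Fin n | n - (n - k + (i.val + 1) - lam i) ≤ l.val} =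
          {l : Fin n | (a i).val ≤ l.val} := by
        ext l; simp only [Set.mem_setOf_eq, ha_val]; omega
      have e2 : {l : Fin n | l.val < n - k + (j.val + 1) - mu j} =
          {l : Fin n | l.val ≤ (a i).val} := by
        ext l; simp only [Set.mem_setOf_eq, ha_val, hjval]; omega
      rw [e1] at hF
      rw [e2] at hE
      set A := coordSub n {l : Fin n | (a i).val ≤ l.val} with hA
      set B := coordSub n {l : Fin n | l.val ≤ (a i).val} with hB
      have hsum := Submodule.finrank_sup_add_finrank_inf_eq (V ⊓ A) (V ⊓ B)
      have hsup : Module.finrank ℂ ↥((V ⊓ A) ⊔ (V ⊓ B)) ≤ k := by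
        rw [← hVrk]
        exact Submodule.finrank_mono (sup_le inf_le_left inf_le_left)
      have hinf_eq : (V ⊓ A) ⊓ (V ⊓ B) = V ⊓ coordSub n {a i} := by
        rw [← inf_inf_distrib_left, hA, hB, coordSub_inf]
        congr 1
        congr 1
        ext l
        simp only [Set.mem_inter_iff, Set.mem_setOf_eq, Set.mem_singleton_iff, Fin.ext_iff]
        omega
      rw [hinf_eq] at hsum
      have h1 : 1 ≤ Module.finrank ℂ ↥(V ⊓ coordSub n {a i}) := by omega
      have hne : V ⊓ coordSub n {a i} ≠ ⊥ := by
        intro h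
        rw [h, finrank_bot] at h1
        omega
      obtain ⟨x, hx, hx0⟩ := Submodule.exists_mem_ne_zero_of_ne_bot hne
      rw [Submodule.mem_inf] at hx
      have hxc : ∀ l, l ≠ a i → x l = 0 := fun l hl => hx.2 l (by simpa using hl)
      have hcne : x (a i) ≠ 0 := by
        intro h
        apply hx0
        funext l
        by_cases hl : l = a i
        · rw [hl, h]; rfl
        · exact hxc l hl
      have hux : stdBasisVec n (a i) = (x (a i))⁻¹ • x := by
        funext l
        by_cases hl : l = a i
        · subst hl
          simp [stdBasisVec, inv_mul_cancel₀ hcne]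
        · simp [stdBasisVec, Pi.single_eq_of_ne hl, hxc l hl]
      rw [hux]
      exact V.smul_mem _ hx.1
    have hle : coordSub n S₀ ≤ V := by
      rw [← span_image_eq, Submodule.span_le]
      rintro _ ⟨jj, hjj, rfl⟩
      rw [hS₀a] at hjj
      obtain ⟨i, rfl⟩ := hjj
      exact key i
    exact (Submodule.eq_of_le_of_finrank_le hle (by rw [hrk0, hVrk])).symm
  · rintro rfl
    have hmemF : coordSub n S₀ ∈ SchubertVariety n k lam (stdFlag n) := by
      refine ⟨hrk0, fun i => ?_⟩
      rw [hstd, coordSub_inf]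
      refine le_finrank_coordSub (fun m : Fin (i.val + 1) =>
        a ⟨m.val, lt_of_le_of_lt (Nat.lt_succ_iff.1 m.2) i.2⟩) ?_ _ ?_
      · intro m m' h
        have := ha_inj h
        exact Fin.ext (by simpa [Fin.ext_iff] using this)
      · intro m
        have hm : m.val ≤ i.val := Nat.lt_succ_iff.1 m.2
        refine ⟨⟨_, (ha_val _)⟩, ?_⟩
        refine le_trans ?_ (ha_anti ⟨m.val, lt_of_le_of_lt hm i.2⟩ i hm)
        have hli := hlam_le i
        have hik := i.2
        rw [ha_val]
        omega
    have hmemE : coordSub n S₀ ∈ SchubertVariety n k mu (oppFlag n) := by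
      refine ⟨hrk0, fun j => ?_⟩
      have hjk : j.val < k := j.2
      rw [hopp, coordSub_inf]
      refine le_finrank_coordSub (fun m : Fin (j.val + 1) =>
        a ⟨k - 1 - j.val + m.val, by have := Nat.lt_succ_iff.1 m.2; omega⟩) ?_ _ ?_
      · intro m m' h
        have := ha_inj h
        simp only [Fin.ext_iff] at this ⊢
        omega
      · intro m
        have hm : m.val ≤ j.val := Nat.lt_succ_iff.1 m.2
        refine ⟨⟨_, (ha_val _)⟩, ?_⟩
        set i0 : Fin k := ⟨k - 1 - j.val, by omega⟩ with hi0
        have hci := hcomp i0 j (by simp only [hi0]; omega)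
        refine lt_of_le_of_lt
          (ha_anti i0 ⟨k - 1 - j.val + m.val, by omega⟩
            (by rw [Fin.le_def]; exact Nat.le_add_right _ _)) ?_
        have hmuj := hmu_le j
        have hli0 := hlam_le i0
        have hi0v : i0.val = k - 1 - j.val := rfl
        rw [ha_val]
        omega
    exact ⟨hmemF, hmemE⟩
end

section
/- Fix N ≥ 1 and r ≥ 1, and let λ be a partition. In the polynomial ring ℤ[x_1,…,x_N], the product of Schur polynomials satisfies s_{(r)}(x_1,…,x_N) · s_λ(x_1,…,x_N) = Σ_ν s_ν(x_1,…,x_N), where the sum ranges over all partitions ν containing λ such that |ν| = |λ| + r and ν/λ is a horizontal strip (i.e. ν_{i+1} ≤ λ_i for all i). -/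
open MvPolynomial

/-- A partition: a weakly decreasing sequence of nonnegative integers, eventually zero
(0-based: `l 0` is `λ₁`). -/
def IsPartition (l : ℕ → ℕ) : Prop :=
  Antitone l ∧ ∃ M, ∀ i, M ≤ i → l i = 0

/-- The size `|λ| = Σ λᵢ` of a partition. -/
noncomputable def partSize (l : ℕ → ℕ) : ℕ := ∑ᶠ i, l i

/-- Membership of the cell `p = (row, column)` (0-based) in the skew shape `hi / lo`. -/
def InSkewShape (lo hi : ℕ → ℕ) (p : ℕ × ℕ) : Prop :=
  lo p.1 ≤ p.2 ∧ p.2 < hi p.1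

/-- A semistandard Young tableau of skew shape `hi / lo`, encoded as a function on cells
`(row, column)` (0-based) assigning the entry to each cell of the shape and `0` elsewhere:
entries in the shape are positive, rows weakly increase left to right, and columns
strictly increase downward. -/
def IsSkewSSYT (lo hi : ℕ → ℕ) (T : ℕ × ℕ → ℕ) : Prop :=
  (∀ p, InSkewShape lo hi p → 1 ≤ T p) ∧
  (∀ p, ¬ InSkewShape lo hi p → T p = 0) ∧
  (∀ i j j', InSkewShape lo hi (i, j) → j ≤ j' → InSkewShape lo hi (i, j') →
    T (i, j) ≤ T (i, j')) ∧
  (∀ i j, InSkewShape lo hi (i, j) → InSkewShape lo hi (i + 1, j) →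
    T (i, j) < T (i + 1, j))

/-- The number of entries of the tableau `T` equal to `m` (for `m ≥ 1` this counts cells
of the shape, since `T` vanishes off the shape). -/
noncomputable def entryCount (T : ℕ × ℕ → ℕ) (m : ℕ) : ℕ :=
  Set.ncard {p : ℕ × ℕ | T p = m}

/-- `T` has content `μ`: exactly `μ_m` entries equal `m` for each `m ≥ 1`
(`mu` is 0-based, so `mu m` is `μ_{m+1}`). -/
def HasContent (T : ℕ × ℕ → ℕ) (mu : ℕ → ℕ) : Prop :=
  ∀ m : ℕ, entryCount T (m + 1) = mu m

/-- The monomial weight `x^T = ∏ᵢ xᵢ^(number of entries of `T` equal to `i`)`. -/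
noncomputable def tabWeight (N : ℕ) (T : ℕ × ℕ → ℕ) : MvPolynomial (Fin N) ℤ :=
  ∏ i : Fin N, (X i) ^ entryCount T (i.val + 1)

/-- The Schur polynomial `s_λ(x_1, …, x_N) = Σ_T x^T`, summed over all semistandard
Young tableaux of shape `λ` with entries in `{1, …, N}`. -/
noncomputable def schurPoly (N : ℕ) (lam : ℕ → ℕ) : MvPolynomial (Fin N) ℤ :=
  ∑ᶠ T ∈ {T : ℕ × ℕ → ℕ | IsSkewSSYT (fun _ => 0) lam T ∧ ∀ p, T p ≤ N}, tabWeight N T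

/-- Count of the letter `m` in the suffix of the reading word of `T` beginning at position
`(i, j)`: the reading word concatenates rows bottom-to-top, so this suffix consists of the
cells of row `i` in columns `≥ j` together with all cells in rows `< i`. -/
noncomputable def suffixCount (T : ℕ × ℕ → ℕ) (i j m : ℕ) : ℕ :=
  Set.ncard {p : ℕ × ℕ | (p.1 < i ∨ (p.1 = i ∧ j ≤ p.2)) ∧ T p = m}

/-- The reading word of `T` (rows concatenated bottom to top, each left to right) is
Yamanouchi: every suffix contains at least as many letters `m` as letters `m + 1`. -/
def IsYamanouchi (T : ℕ × ℕ → ℕ) : Prop :=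
  ∀ i j m : ℕ, suffixCount T i j (m + 2) ≤ suffixCount T i j (m + 1)

/-- The one-row partition `(r)`. -/
def oneRow (r : ℕ) : ℕ → ℕ := fun i => if i = 0 then r else 0

/-!
Induct on the largest entry `K` allowed in the tableaux (`boundedSchur N K`). Erasing the entries
`K + 1` of a tableau of shape `λ` leaves a tableau of a shape `μ` with `λ/μ` a horizontal strip,
whence the branching rule `s_λ^(K+1) = Σ_μ s_μ^(K) x_(K+1)^(|λ| - |μ|)`. Expanding both sides of
the Pieri rule by it (and the left side further by the induction hypothesis) turns the claim into
a bijection between pairs `(μ, ρ)` with `λ/μ`, `ρ/μ` horizontal strips and `|ρ/μ| ≤ r`, and pairs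
`(ν, ρ)` with `ν/λ` a horizontal strip of size `r` and `ν/ρ` a horizontal strip. Both conditions
confine `μᵢ` resp. `νᵢ₊₁` to the interval `[max(λᵢ₊₁, ρᵢ₊₁), min(λᵢ, ρᵢ)]`; reflecting in that
interval matches them, and `ν₀` is then forced by `|ν| = |λ| + r`.
-/

namespace Pieri

open Finset

lemma finsum_mem_setOf_prod {α β M : Type*} [AddCommMonoid M] {s : Set α} {t : α → Set β}
    (hs : s.Finite) (ht : ∀ a ∈ s, (t a).Finite) (f : α × β → M) :
    ∑ᶠ p ∈ {p : α × β | p.1 ∈ s ∧ p.2 ∈ t p.1}, f p = ∑ᶠ a ∈ s, ∑ᶠ b ∈ t a, f (a, b) := by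
  have hunion : {p : α × β | p.1 ∈ s ∧ p.2 ∈ t p.1} = ⋃ a ∈ s, Prod.mk a '' t a := by
    ext ⟨a, b⟩
    simp [and_comm]
  have hdisj : s.PairwiseDisjoint fun a => Prod.mk a '' t a := by
    intro a _ a' _ hne
    refine Set.disjoint_left.2 ?_
    rintro _ ⟨b, -, rfl⟩ ⟨b', -, h⟩
    exact hne (congrArg Prod.fst h).symm
  rw [hunion, finsum_mem_biUnion hdisj hs fun a ha => (ht a ha).image _]
  exact finsum_mem_congr rfl fun a _ => finsum_mem_image (Prod.mk_right_injective a).injOn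

lemma finite_setOf_forall_le {α : Type*} (b : α → ℕ) (hb : (Function.support b).Finite) :
    {f : α → ℕ | ∀ a, f a ≤ b a}.Finite := by
  have := hb.to_subtype
  refine Set.Finite.of_finite_image (f := fun f (a : Function.support b) => f a) ?_ ?_
  · refine (Set.Finite.pi (ι := Function.support b) fun a => Set.finite_Iic (b a)).subset ?_
    rintro _ ⟨f, hf, rfl⟩ a -
    exact hf a
  · intro f hf g hg hfg
    funext a
    by_cases ha : b a = 0
    · have := hf a
      have := hg a
      omega
    · exact congrFun hfg ⟨a, ha⟩

lemma finite_support_of_eventually_zero {M : ℕ} {l : ℕ → ℕ} (hM : ∀ i, M ≤ i → l i = 0) :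
    (Function.support l).Finite :=
  (Set.finite_Iio M).subset fun i hi => not_le.1 fun h => hi (hM i h)

section Partitions

lemma partSize_eq_sum_range {M : ℕ} {l : ℕ → ℕ} (hM : ∀ i, M ≤ i → l i = 0) :
    partSize l = ∑ i ∈ range M, l i :=
  finsum_eq_sum_of_support_subset l fun i hi => by
    simpa using not_le.1 fun h => hi (hM i h)

lemma partSize_mono {M : ℕ} {mu lam : ℕ → ℕ} (hM : ∀ i, M ≤ i → lam i = 0)
    (h : ∀ i, mu i ≤ lam i) : partSize mu ≤ partSize lam := by
  rw [partSize_eq_sum_range hM, partSize_eq_sum_range (M := M) fun i hi => by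
    simpa [hM i hi] using h i]
  exact sum_le_sum fun i _ => h i

lemma le_partSize {M : ℕ} {l : ℕ → ℕ} (hM : ∀ i, M ≤ i → l i = 0) (i : ℕ) :
    l i ≤ partSize l :=
  single_le_finsum i (finite_support_of_eventually_zero hM) fun _ => Nat.zero_le _

def stripsBelow (lam : ℕ → ℕ) : Set (ℕ → ℕ) :=
  {mu | IsPartition mu ∧ (∀ i, mu i ≤ lam i) ∧ ∀ i, lam (i + 1) ≤ mu i}

def stripsAbove (lam : ℕ → ℕ) (r : ℕ) : Set (ℕ → ℕ) :=
  {nu | IsPartition nu ∧ (∀ i, lam i ≤ nu i) ∧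
    partSize nu = partSize lam + r ∧ ∀ i, nu (i + 1) ≤ lam i}

def stripsAboveUpTo (mu : ℕ → ℕ) (r : ℕ) : Set (ℕ → ℕ) :=
  {rho | IsPartition rho ∧ (∀ i, mu i ≤ rho i) ∧
    partSize rho ≤ partSize mu + r ∧ ∀ i, rho (i + 1) ≤ mu i}

variable {lam mu : ℕ → ℕ} {r : ℕ}

lemma finite_stripsBelow (hlam : IsPartition lam) : (stripsBelow lam).Finite := by
  obtain ⟨M, hM⟩ := hlam.2
  exact (finite_setOf_forall_le lam (finite_support_of_eventually_zero hM)).subset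
    fun _ hmu => hmu.2.1

lemma finite_stripsAboveUpTo (hmu : IsPartition mu) (r : ℕ) : (stripsAboveUpTo mu r).Finite := by
  obtain ⟨M, hM⟩ := hmu.2
  let b : ℕ → ℕ := fun
    | 0 => partSize mu + r
    | i + 1 => mu i
  refine (finite_setOf_forall_le b (finite_support_of_eventually_zero (M := M + 1) ?_)).subset ?_
  · rintro (_ | i) hi
    · omega
    · exact hM i (by omega)
  · rintro rho ⟨⟨-, Mr, hMr⟩, -, hsize, hstrip⟩ (_ | i)
    · exact (le_partSize hMr 0).trans hsize
    · exact hstrip i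

lemma stripsAbove_subset_stripsAboveUpTo : stripsAbove lam r ⊆ stripsAboveUpTo lam r :=
  fun _ ⟨hnu, hle, hsize, hstrip⟩ => ⟨hnu, hle, hsize.le, hstrip⟩

lemma finite_stripsAbove (hlam : IsPartition lam) (r : ℕ) : (stripsAbove lam r).Finite :=
  (finite_stripsAboveUpTo hlam r).subset stripsAbove_subset_stripsAboveUpTo

lemma biUnion_stripsAbove : ⋃ k ∈ Set.Iic r, stripsAbove mu k = stripsAboveUpTo mu r := by
  ext rho
  simp only [Set.mem_iUnion, Set.mem_Iic, exists_prop]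
  constructor
  · rintro ⟨k, hk, hrho, hle, hsize, hstrip⟩
    exact ⟨hrho, hle, by omega, hstrip⟩
  · rintro ⟨hrho, hle, hsize, hstrip⟩
    obtain ⟨M, hM⟩ := hrho.2
    have := partSize_mono hM hle
    exact ⟨partSize rho - partSize mu, by omega, hrho, hle, by omega, hstrip⟩

lemma finsum_mem_stripsAboveUpTo {R : Type*} [AddCommMonoid R] (hmu : IsPartition mu)
    (F : (ℕ → ℕ) → R) :
    ∑ᶠ rho ∈ stripsAboveUpTo mu r, F rho = ∑ᶠ k ∈ Set.Iic r, ∑ᶠ rho ∈ stripsAbove mu k, F rho := by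
  rw [← biUnion_stripsAbove, finsum_mem_biUnion _ (Set.finite_Iic r)
    fun k _ => finite_stripsAbove hmu k]
  intro k _ k' _ hne
  exact Set.disjoint_left.2 fun rho h h' => hne (by have := h.2.2.1; have := h'.2.2.1; omega)

end Partitions

section Interlacing

variable {lam rho mu nu : ℕ → ℕ} {r : ℕ}

lemma mem_stripsBelow_and_mem_stripsAboveUpTo_iff (hlam : IsPartition lam) :
    mu ∈ stripsBelow lam ∧ rho ∈ stripsAboveUpTo mu r ↔
      IsPartition rho ∧ partSize rho ≤ partSize mu + r ∧
        ∀ i, max (lam (i + 1)) (rho (i + 1)) ≤ mu i ∧ mu i ≤ min (lam i) (rho i) := by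
  constructor
  · rintro ⟨⟨-, hmu, hlam'⟩, hrho, hmu', hsize, hrho'⟩
    exact ⟨hrho, hsize, fun i => ⟨max_le (hlam' i) (hrho' i), le_min (hmu i) (hmu' i)⟩⟩
  · rintro ⟨hrho, hsize, hmu⟩
    obtain ⟨M, hM⟩ := hlam.2
    have hmu_part : IsPartition mu := by
      refine ⟨antitone_nat_of_succ_le fun i => ?_, M, fun i hi => ?_⟩
      · have := hmu i
        have := hmu (i + 1)
        omega
      · have := hmu i
        have := hM i hi
        omega
    exact ⟨⟨hmu_part, fun i => (hmu i).2.trans (min_le_left _ _),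
        fun i => (le_max_left _ _).trans (hmu i).1⟩,
      hrho, fun i => (hmu i).2.trans (min_le_right _ _), hsize,
        fun i => (le_max_right _ _).trans (hmu i).1⟩

lemma mem_stripsAbove_and_mem_stripsBelow_iff (hlam : IsPartition lam) :
    nu ∈ stripsAbove lam r ∧ rho ∈ stripsBelow nu ↔
      IsPartition rho ∧ partSize nu = partSize lam + r ∧ max (lam 0) (rho 0) ≤ nu 0 ∧
        ∀ i, max (lam (i + 1)) (rho (i + 1)) ≤ nu (i + 1) ∧ nu (i + 1) ≤ min (lam i) (rho i) := by
  constructor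
  · rintro ⟨⟨-, hnu, hsize, hnu'⟩, hrho, hrho', hnu''⟩
    exact ⟨hrho, hsize, max_le (hnu 0) (hrho' 0),
      fun i => ⟨max_le (hnu _) (hrho' _), le_min (hnu' i) (hnu'' i)⟩⟩
  · rintro ⟨hrho, hsize, h0, hnu⟩
    obtain ⟨M, hM⟩ := hlam.2
    have hnu_part : IsPartition nu := by
      refine ⟨antitone_nat_of_succ_le fun i => ?_, M + 1, fun i hi => ?_⟩
      · rcases i with _ | i
        · have := hnu 0
          omega
        · have := hnu i
          have := hnu (i + 1)
          omega
      · obtain ⟨i, rfl⟩ : ∃ j, i = j + 1 := ⟨i - 1, by omega⟩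
        have := hnu i
        have := hM i (by omega)
        omega
    refine ⟨⟨hnu_part, fun i => ?_, hsize, fun i => (hnu i).2.trans (min_le_left _ _)⟩,
      hrho, fun i => ?_, fun i => (hnu i).2.trans (min_le_right _ _)⟩
    · rcases i with _ | i
      · exact (le_max_left _ _).trans h0
      · exact (le_max_left _ _).trans (hnu i).1
    · rcases i with _ | i
      · exact (le_max_right _ _).trans h0
      · exact (le_max_right _ _).trans (hnu i).1

lemma partSize_add_partSize_add_max (hlam : IsPartition lam) (hrho : IsPartition rho)
    (h : ∀ i, nu (i + 1) + mu i = max (lam (i + 1)) (rho (i + 1)) + min (lam i) (rho i)) :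
    partSize nu + partSize mu + max (lam 0) (rho 0) = partSize lam + partSize rho + nu 0 := by
  obtain ⟨Ml, hMl⟩ := hlam.2
  obtain ⟨Mr, hMr⟩ := hrho.2
  set M := max Ml Mr
  have hlam0 : ∀ i, M ≤ i → lam i = 0 := fun i hi => hMl i (le_of_max_le_left hi)
  have hrho0 : ∀ i, M ≤ i → rho i = 0 := fun i hi => hMr i (le_of_max_le_right hi)
  have hmu0 : ∀ i, M ≤ i → mu i = 0 := fun i hi => by
    have := h i
    have := hlam0 i hi
    have := hlam0 (i + 1) (by omega)
    have := hrho0 (i + 1) (by omega)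
    omega
  have hnu0 : ∀ i, M + 1 ≤ i → nu i = 0 := fun i hi => by
    obtain ⟨i, rfl⟩ : ∃ j, i = j + 1 := ⟨i - 1, by omega⟩
    have := h i
    have := hlam0 i (by omega)
    have := hlam0 (i + 1) (by omega)
    have := hrho0 (i + 1) (by omega)
    omega
  have hpair : ∑ i ∈ range M, nu (i + 1) + ∑ i ∈ range M, mu i =
      ∑ i ∈ range M, max (lam (i + 1)) (rho (i + 1)) + ∑ i ∈ range M, min (lam i) (rho i) := by
    rw [← sum_add_distrib, ← sum_add_distrib]
    exact sum_congr rfl fun i _ => h i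
  have hmax_add_min : ∑ i ∈ range (M + 1), lam i + ∑ i ∈ range (M + 1), rho i =
      ∑ i ∈ range (M + 1), max (lam i) (rho i) + ∑ i ∈ range (M + 1), min (lam i) (rho i) := by
    rw [← sum_add_distrib, ← sum_add_distrib]
    exact sum_congr rfl fun i _ => (max_add_min _ _).symm
  have hmax : ∑ i ∈ range (M + 1), max (lam i) (rho i) =
      ∑ i ∈ range M, max (lam (i + 1)) (rho (i + 1)) + max (lam 0) (rho 0) := sum_range_succ' _ _
  have hmin : ∑ i ∈ range (M + 1), min (lam i) (rho i) =
      ∑ i ∈ range M, min (lam i) (rho i) + min (lam M) (rho M) := sum_range_succ _ _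
  have hnu : ∑ i ∈ range (M + 1), nu i = ∑ i ∈ range M, nu (i + 1) + nu 0 := sum_range_succ' _ _
  have := hlam0 M le_rfl
  rw [partSize_eq_sum_range hnu0, partSize_eq_sum_range hmu0,
    partSize_eq_sum_range (M := M + 1) fun i hi => hlam0 i (by omega),
    partSize_eq_sum_range (M := M + 1) fun i hi => hrho0 i (by omega)]
  omega

/-- `ν₀` is chosen so that `|ν| = |λ| + r`, by `partSize_add_partSize_add_max`. -/
noncomputable def reflectUp (lam rho : ℕ → ℕ) (r : ℕ) (mu : ℕ → ℕ) : ℕ → ℕ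
  | 0 => r + partSize mu + max (lam 0) (rho 0) - partSize rho
  | i + 1 => max (lam (i + 1)) (rho (i + 1)) + min (lam i) (rho i) - mu i

def reflectDown (lam rho nu : ℕ → ℕ) : ℕ → ℕ := fun i =>
  max (lam (i + 1)) (rho (i + 1)) + min (lam i) (rho i) - nu (i + 1)

lemma reflectUp_mem (hlam : IsPartition lam)
    (h : mu ∈ stripsBelow lam ∧ rho ∈ stripsAboveUpTo mu r) :
    (reflectUp lam rho r mu ∈ stripsAbove lam r ∧ rho ∈ stripsBelow (reflectUp lam rho r mu)) ∧
      reflectDown lam rho (reflectUp lam rho r mu) = mu := by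
  obtain ⟨hrho, hsize, hmu⟩ := (mem_stripsBelow_and_mem_stripsAboveUpTo_iff hlam).1 h
  have hsucc : ∀ i, reflectUp lam rho r mu (i + 1) + mu i =
      max (lam (i + 1)) (rho (i + 1)) + min (lam i) (rho i) := fun i => by
    have := hmu i
    simp only [reflectUp]
    omega
  have hsum := partSize_add_partSize_add_max hlam hrho hsucc
  simp only [reflectUp] at hsum
  refine ⟨(mem_stripsAbove_and_mem_stripsBelow_iff hlam).2 ⟨hrho, by omega, ?_, fun i => ?_⟩, ?_⟩
  · simp only [reflectUp]
    omega
  · have := hmu i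
    simp only [reflectUp]
    omega
  · funext i
    have := hmu i
    simp only [reflectDown, reflectUp]
    omega

lemma reflectDown_mem (hlam : IsPartition lam)
    (h : nu ∈ stripsAbove lam r ∧ rho ∈ stripsBelow nu) :
    (reflectDown lam rho nu ∈ stripsBelow lam ∧ rho ∈ stripsAboveUpTo (reflectDown lam rho nu) r) ∧
      reflectUp lam rho r (reflectDown lam rho nu) = nu := by
  obtain ⟨hrho, hsize, h0, hnu⟩ := (mem_stripsAbove_and_mem_stripsBelow_iff hlam).1 h
  have hsucc : ∀ i, nu (i + 1) + reflectDown lam rho nu i =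
      max (lam (i + 1)) (rho (i + 1)) + min (lam i) (rho i) := fun i => by
    have := hnu i
    simp only [reflectDown]
    omega
  have hsum := partSize_add_partSize_add_max hlam hrho hsucc
  refine ⟨(mem_stripsBelow_and_mem_stripsAboveUpTo_iff hlam).2 ⟨hrho, by omega, fun i => ?_⟩, ?_⟩
  · have := hnu i
    simp only [reflectDown]
    omega
  · funext i
    rcases i with _ | i
    · simp only [reflectUp]
      omega
    · have := hnu i
      simp only [reflectUp, reflectDown]
      omega

lemma finsum_stripsBelow_stripsAboveUpTo {R : Type*} [AddCommMonoid R] (hlam : IsPartition lam)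
    (F : (ℕ → ℕ) → R) :
    ∑ᶠ mu ∈ stripsBelow lam, ∑ᶠ rho ∈ stripsAboveUpTo mu r, F rho =
      ∑ᶠ nu ∈ stripsAbove lam r, ∑ᶠ rho ∈ stripsBelow nu, F rho := by
  rw [← finsum_mem_setOf_prod (finite_stripsBelow hlam)
      (fun mu hmu => finite_stripsAboveUpTo hmu.1 r) fun p => F p.2,
    ← finsum_mem_setOf_prod (finite_stripsAbove hlam r)
      (fun nu hnu => finite_stripsBelow hnu.1) fun p => F p.2]
  refine finsum_mem_eq_of_bijOn (fun p => (reflectUp lam p.2 r p.1, p.2))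
    (Set.InvOn.bijOn (f' := fun p => (reflectDown lam p.2 p.1, p.2)) ⟨?_, ?_⟩ ?_ ?_)
    fun _ _ => rfl
  · rintro ⟨mu, rho⟩ h
    simp only [(reflectUp_mem hlam h).2]
  · rintro ⟨nu, rho⟩ h
    simp only [(reflectDown_mem hlam h).2]
  · exact fun p h => (reflectUp_mem hlam h).1
  · exact fun p h => (reflectDown_mem hlam h).1

end Interlacing

section Tableaux

def ssyt (K : ℕ) (lam : ℕ → ℕ) : Set (ℕ × ℕ → ℕ) :=
  {T | IsSkewSSYT (fun _ => 0) lam T ∧ ∀ p, T p ≤ K}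

variable {K : ℕ} {lam mu : ℕ → ℕ} {T S : ℕ × ℕ → ℕ}

lemma mem_ssyt : T ∈ ssyt K lam ↔
    ((∀ i j, j < lam i → 1 ≤ T (i, j)) ∧ (∀ i j, lam i ≤ j → T (i, j) = 0) ∧
      (∀ i j j', j ≤ j' → j' < lam i → T (i, j) ≤ T (i, j')) ∧
      (∀ i j, j < lam i → j < lam (i + 1) → T (i, j) < T (i + 1, j))) ∧ ∀ p, T p ≤ K := by
  simp only [ssyt, Set.mem_ofPred_eq, IsSkewSSYT, InSkewShape, zero_le, true_and, not_lt,
    Prod.forall]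
  exact and_congr_left' <| and_congr_right' <| and_congr_right' <| and_congr_left'
    ⟨fun h i j j' hj hj' => h i j j' (hj.trans_lt hj') hj hj', fun h i j j' _ => h i j j'⟩

def cells (M : ℕ) (lam : ℕ → ℕ) : Finset (ℕ × ℕ) :=
  ((range M).sigma fun i => range (lam i)).map (Equiv.sigmaEquivProd ℕ ℕ).toEmbedding

lemma mem_cells {M : ℕ} (hM : ∀ i, M ≤ i → lam i = 0) {p : ℕ × ℕ} :
    p ∈ cells M lam ↔ p.2 < lam p.1 := by
  simp only [cells, mem_map_equiv, Equiv.sigmaEquivProd_symm_apply, mem_sigma, mem_range,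
    and_iff_right_iff_imp]
  exact fun h => not_le.1 fun hp => by simp [hM p.1 hp] at h

lemma card_cells (M : ℕ) (lam : ℕ → ℕ) : #(cells M lam) = ∑ i ∈ range M, lam i := by
  simp [cells]

lemma finite_ssyt (K : ℕ) (hlam : IsPartition lam) : (ssyt K lam).Finite := by
  obtain ⟨M, hM⟩ := hlam.2
  refine (finite_setOf_forall_le (fun p => if p ∈ cells M lam then K else 0)
    ((cells M lam).finite_toSet.subset fun p hp => ?_)).subset fun T hT p => ?_
  · by_contra h
    exact hp (if_neg h)
  · obtain ⟨⟨-, hzero, -, -⟩, hK⟩ := mem_ssyt.1 hT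
    split_ifs with hp
    · exact hK p
    · exact (hzero p.1 p.2 (not_lt.1 ((mem_cells hM).not.1 hp))).le

noncomputable def boundedSchur (N K : ℕ) (lam : ℕ → ℕ) : MvPolynomial (Fin N) ℤ :=
  ∑ᶠ T ∈ ssyt K lam, tabWeight N T

/-- Row `i` of the shape filled by the entries `≤ K` of `T`. -/
def shapeLE (K : ℕ) (lam : ℕ → ℕ) (T : ℕ × ℕ → ℕ) (i : ℕ) : ℕ :=
  Nat.findGreatest (fun m => ∀ j < m, T (i, j) ≤ K) (lam i)

def truncate (K : ℕ) (T : ℕ × ℕ → ℕ) : ℕ × ℕ → ℕ := fun p => if T p ≤ K then T p else 0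

def extend (K : ℕ) (lam mu : ℕ → ℕ) (S : ℕ × ℕ → ℕ) : ℕ × ℕ → ℕ := fun p =>
  if p.2 < mu p.1 then S p else if p.2 < lam p.1 then K + 1 else 0

lemma shapeLE_le (K : ℕ) (lam : ℕ → ℕ) (T : ℕ × ℕ → ℕ) (i : ℕ) : shapeLE K lam T i ≤ lam i :=
  Nat.findGreatest_le _

lemma lt_shapeLE_iff (hT : T ∈ ssyt (K + 1) lam) {i j : ℕ} (hj : j < lam i) :
    j < shapeLE K lam T i ↔ T (i, j) ≤ K := by
  refine ⟨fun h => Nat.findGreatest_spec (P := fun m => ∀ j < m, T (i, j) ≤ K) (m := 0)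
    (Nat.zero_le _) (fun _ h => absurd h (Nat.not_lt_zero _)) j h, fun h => ?_⟩
  have hrow := (mem_ssyt.1 hT).1.2.2.1
  exact Nat.le_findGreatest hj fun j' hj' => (hrow i j' j (by omega) hj).trans h

lemma shapeLE_mem_stripsBelow (hlam : IsPartition lam) (hT : T ∈ ssyt (K + 1) lam) :
    shapeLE K lam T ∈ stripsBelow lam := by
  obtain ⟨⟨-, -, -, hcol⟩, hK⟩ := mem_ssyt.1 hT
  obtain ⟨M, hM⟩ := hlam.2
  have hsucc (i : ℕ) : lam (i + 1) ≤ shapeLE K lam T i :=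
    Nat.le_findGreatest (hlam.1 (Nat.le_succ i)) fun j hj => by
      have := hcol i j (hj.trans_le (hlam.1 (Nat.le_succ i))) hj
      have := hK (i + 1, j)
      omega
  refine ⟨⟨antitone_nat_of_succ_le fun i => (shapeLE_le _ _ _ _).trans (hsucc i), M,
    fun i hi => ?_⟩, shapeLE_le K lam T, hsucc⟩
  have := shapeLE_le K lam T i
  rw [hM i hi] at this
  omega

lemma truncate_mem_ssyt (hT : T ∈ ssyt (K + 1) lam) :
    truncate K T ∈ ssyt K (shapeLE K lam T) := by
  have hin {i j : ℕ} (hj : j < shapeLE K lam T i) :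
      j < lam i ∧ truncate K T (i, j) = T (i, j) := by
    have hj' := hj.trans_le (shapeLE_le K lam T i)
    exact ⟨hj', if_pos ((lt_shapeLE_iff hT hj').1 hj)⟩
  obtain ⟨⟨hpos, hzero, hrow, hcol⟩, -⟩ := mem_ssyt.1 hT
  refine mem_ssyt.2 ⟨⟨fun i j hj => ?_, fun i j hj => ?_, fun i j j' hjj hj => ?_,
    fun i j hj hj' => ?_⟩, fun p => ?_⟩
  · rw [(hin hj).2]
    exact hpos i j (hin hj).1
  · by_cases hj' : j < lam i
    · exact if_neg fun h => hj.not_gt ((lt_shapeLE_iff hT hj').2 h)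
    · simp [truncate, hzero i j (not_lt.1 hj')]
  · rw [(hin (hjj.trans_lt hj)).2, (hin hj).2]
    exact hrow i j j' hjj (hin hj).1
  · rw [(hin hj).2, (hin hj').2]
    exact hcol i j (hin hj).1 (hin hj').1
  · unfold truncate
    split_ifs with h <;> omega

lemma extend_mem_ssyt (hmu : mu ∈ stripsBelow lam) (hS : S ∈ ssyt K mu) :
    extend K lam mu S ∈ ssyt (K + 1) lam := by
  obtain ⟨⟨hpos, hzero, hrow, hcol⟩, hK⟩ := mem_ssyt.1 hS
  obtain ⟨⟨hmu_anti, -⟩, hle, hstrip⟩ := hmu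
  refine mem_ssyt.2 ⟨⟨fun i j hj => ?_, fun i j hj => ?_, fun i j j' hjj hj => ?_,
    fun i j hj hj' => ?_⟩, fun p => ?_⟩ <;> simp only [extend]
  · split_ifs with h
    · exact hpos i j h
    · omega
  · have := hle i
    rw [if_neg (by omega), if_neg (by omega)]
  · have := hK (i, j)
    split_ifs <;> first | omega | exact hrow i j j' hjj ‹_›
  · have := hK (i, j)
    have := hstrip i
    have := hmu_anti (Nat.le_succ i)
    split_ifs <;> first | omega | exact hcol i j ‹_› ‹_›
  · have := hK p
    split_ifs <;> omega

lemma shapeLE_extend (hmu : mu ∈ stripsBelow lam) (hS : S ∈ ssyt K mu) :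
    shapeLE K lam (extend K lam mu S) = mu := by
  funext i
  refine eq_of_forall_lt_iff fun j => ?_
  by_cases hj : j < lam i
  · rw [lt_shapeLE_iff (extend_mem_ssyt hmu hS) hj]
    have := (mem_ssyt.1 hS).2 (i, j)
    simp only [extend]
    split_ifs <;> omega
  · have := shapeLE_le K lam (extend K lam mu S) i
    have := hmu.2.1 i
    omega

lemma truncate_extend (hmu : mu ∈ stripsBelow lam) (hS : S ∈ ssyt K mu) :
    truncate K (extend K lam mu S) = S := by
  obtain ⟨⟨-, hzero, -, -⟩, hK⟩ := mem_ssyt.1 hS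
  funext ⟨i, j⟩
  have := hmu.2.1 i
  have := hK (i, j)
  simp only [truncate, extend]
  split_ifs <;> first | omega | exact (hzero i j (by omega)).symm

lemma extend_truncate (hT : T ∈ ssyt (K + 1) lam) :
    extend K lam (shapeLE K lam T) (truncate K T) = T := by
  obtain ⟨⟨-, hzero, -, -⟩, hK⟩ := mem_ssyt.1 hT
  funext ⟨i, j⟩
  have := shapeLE_le K lam T i
  have := hK (i, j)
  by_cases hj : j < lam i
  · have := lt_shapeLE_iff hT hj
    simp only [extend, truncate]
    split_ifs <;> omega
  · simp only [extend, truncate]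
    split_ifs <;> first | omega | exact (hzero i j (by omega)).symm

lemma entryCount_truncate {m : ℕ} (hm : 1 ≤ m) (hmK : m ≤ K) :
    entryCount (truncate K T) m = entryCount T m := by
  unfold entryCount truncate
  congr 1
  ext p
  simp only [Set.mem_ofPred_eq]
  split_ifs <;> omega

lemma entryCount_eq_zero {B m : ℕ} (hB : ∀ p, T p ≤ B) (hm : B < m) : entryCount T m = 0 := by
  have hempty : {p | T p = m} = ∅ := Set.eq_empty_of_forall_notMem fun p hp => by
    have := hB p
    simp only [Set.mem_ofPred_eq] at hp
    omega
  rw [entryCount, hempty, Set.ncard_empty]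

lemma entryCount_succ (hlam : IsPartition lam) (hT : T ∈ ssyt (K + 1) lam) :
    entryCount T (K + 1) = partSize lam - partSize (shapeLE K lam T) := by
  obtain ⟨M, hM⟩ := hlam.2
  have hM' : ∀ i, M ≤ i → shapeLE K lam T i = 0 := fun i hi => by
    simpa [hM i hi] using shapeLE_le K lam T i
  obtain ⟨⟨-, hzero, -, -⟩, hK⟩ := mem_ssyt.1 hT
  have hsub : cells M (shapeLE K lam T) ⊆ cells M lam := fun p hp => by
    rw [mem_cells hM'] at hp
    exact (mem_cells hM).2 (hp.trans_le (shapeLE_le _ _ _ _))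
  have htop : {p : ℕ × ℕ | T p = K + 1} = ↑(cells M lam \ cells M (shapeLE K lam T)) := by
    ext ⟨i, j⟩
    simp only [Set.mem_ofPred_eq, coe_sdiff, Set.mem_sdiff, mem_coe, mem_cells hM, mem_cells hM']
    have := hK (i, j)
    by_cases hj : j < lam i
    · rw [lt_shapeLE_iff hT hj]
      omega
    · simp [hj, hzero i j (not_lt.1 hj)]
  rw [entryCount, htop, Set.ncard_coe_finset, card_sdiff_of_subset hsub, card_cells, card_cells,
    partSize_eq_sum_range hM, partSize_eq_sum_range hM']

lemma tabWeight_eq_tabWeight_truncate_mul {N : ℕ} (hK : K < N) (hlam : IsPartition lam)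
    (hT : T ∈ ssyt (K + 1) lam) :
    tabWeight N T = tabWeight N (truncate K T) *
      X (⟨K, hK⟩ : Fin N) ^ (partSize lam - partSize (shapeLE K lam T)) := by
  have htrunc : ∀ p, truncate K T p ≤ K := fun p => by
    unfold truncate
    split_ifs <;> omega
  have hfactor (i : Fin N) : (X i : MvPolynomial (Fin N) ℤ) ^ entryCount T (i + 1) =
      X i ^ entryCount (truncate K T) (i + 1) *
        if i = ⟨K, hK⟩ then X i ^ (partSize lam - partSize (shapeLE K lam T)) else 1 := by
    rcases lt_trichotomy i.val K with hi | hi | hi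
    · rw [entryCount_truncate (by omega) hi, if_neg (Fin.ne_of_val_ne hi.ne), mul_one]
    · rw [if_pos (Fin.ext hi), hi, entryCount_succ hlam hT,
        entryCount_eq_zero htrunc (Nat.lt_succ_self K), pow_zero, one_mul]
    · rw [entryCount_eq_zero (mem_ssyt.1 hT).2 (by omega), entryCount_eq_zero htrunc (by omega),
        if_neg (Fin.ne_of_val_ne hi.ne'), mul_one]
  rw [tabWeight, tabWeight, prod_congr rfl fun i _ => hfactor i, prod_mul_distrib,
    prod_ite_eq' univ, if_pos (mem_univ _)]

end Tableaux

theorem boundedSchur_succ {N K : ℕ} (hK : K < N) {lam : ℕ → ℕ} (hlam : IsPartition lam) :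
    boundedSchur N (K + 1) lam = ∑ᶠ mu ∈ stripsBelow lam,
      boundedSchur N K mu * X (⟨K, hK⟩ : Fin N) ^ (partSize lam - partSize mu) := by
  have hbij : Set.BijOn (fun T => (shapeLE K lam T, truncate K T)) (ssyt (K + 1) lam)
      {p | p.1 ∈ stripsBelow lam ∧ p.2 ∈ ssyt K p.1} :=
    Set.InvOn.bijOn (f' := fun p => extend K lam p.1 p.2)
      ⟨fun T hT => extend_truncate hT,
        fun p hp => Prod.ext (shapeLE_extend hp.1 hp.2) (truncate_extend hp.1 hp.2)⟩
      (fun T hT => ⟨shapeLE_mem_stripsBelow hlam hT, truncate_mem_ssyt hT⟩)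
      fun p hp => extend_mem_ssyt hp.1 hp.2
  calc boundedSchur N (K + 1) lam
      = ∑ᶠ p ∈ {p : (ℕ → ℕ) × (ℕ × ℕ → ℕ) | p.1 ∈ stripsBelow lam ∧ p.2 ∈ ssyt K p.1},
          tabWeight N p.2 * X (⟨K, hK⟩ : Fin N) ^ (partSize lam - partSize p.1) :=
        finsum_mem_eq_of_bijOn _ hbij fun T hT => tabWeight_eq_tabWeight_truncate_mul hK hlam hT
    _ = ∑ᶠ mu ∈ stripsBelow lam, ∑ᶠ S ∈ ssyt K mu,
          tabWeight N S * X (⟨K, hK⟩ : Fin N) ^ (partSize lam - partSize mu) :=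
        finsum_mem_setOf_prod (finite_stripsBelow hlam) (fun mu hmu => finite_ssyt K hmu.1) _
    _ = _ := finsum_mem_congr rfl fun mu _ => (finsum_mem_mul _ _).symm

lemma isPartition_oneRow (r : ℕ) : IsPartition (oneRow r) :=
  ⟨fun a b hab => by unfold oneRow; split_ifs <;> omega, 1, fun i hi => if_neg (by omega)⟩

lemma partSize_oneRow (r : ℕ) : partSize (oneRow r) = r := by
  rw [partSize_eq_sum_range (l := oneRow r) (M := 1) fun i hi => if_neg (by omega)]
  simp [oneRow]

lemma oneRow_zero : oneRow 0 = fun _ => 0 := by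
  funext i
  simp [oneRow]

lemma oneRow_injective : Function.Injective oneRow := fun a b h => by
  simpa [oneRow] using congrFun h 0

lemma stripsBelow_oneRow (r : ℕ) : stripsBelow (oneRow r) = oneRow '' Set.Iic r := by
  ext mu
  constructor
  · rintro ⟨-, hle, -⟩
    refine ⟨mu 0, by simpa [oneRow] using hle 0, funext fun i => ?_⟩
    rcases i with _ | i
    · simp [oneRow]
    · have := hle (i + 1)
      simp only [oneRow, Nat.add_one_ne_zero, if_false] at this ⊢
      omega
  · rintro ⟨k, hk, rfl⟩
    refine ⟨isPartition_oneRow k, fun i => ?_, fun i => by simp [oneRow]⟩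
    unfold oneRow
    split_ifs <;> simp_all

lemma boundedSchur_empty (N K : ℕ) : boundedSchur N K (fun _ => 0) = 1 := by
  have hssyt : ssyt K (fun _ => 0) = {fun _ => 0} := by
    ext T
    rw [mem_ssyt, Set.mem_singleton_iff]
    constructor
    · rintro ⟨⟨-, hzero, -, -⟩, -⟩
      exact funext fun p => hzero p.1 p.2 (Nat.zero_le _)
    · rintro rfl
      exact ⟨⟨fun _ _ h => absurd h (Nat.not_lt_zero _), fun _ _ _ => rfl,
        fun _ _ _ _ _ => le_rfl, fun _ _ h => absurd h (Nat.not_lt_zero _)⟩, fun _ => Nat.zero_le _⟩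
  have hcount (m : ℕ) : entryCount (fun _ => 0) (m + 1) = 0 :=
    entryCount_eq_zero (B := 0) (fun _ => le_rfl) m.succ_pos
  simp [boundedSchur, hssyt, tabWeight, hcount]

lemma boundedSchur_zero_of_ne_zero (N : ℕ) {lam : ℕ → ℕ} (h : lam 0 ≠ 0) :
    boundedSchur N 0 lam = 0 := by
  have hssyt : ssyt 0 lam = ∅ := Set.eq_empty_of_forall_notMem fun T hT => by
    have := (mem_ssyt.1 hT).1.1 0 0 (Nat.pos_of_ne_zero h)
    have := (mem_ssyt.1 hT).2 (0, 0)
    omega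
  rw [boundedSchur, hssyt, finsum_mem_empty]

lemma stripsAbove_zero {lam : ℕ → ℕ} (hlam : IsPartition lam) : stripsAbove lam 0 = {lam} := by
  ext nu
  refine ⟨fun ⟨hnu, hle, hsize, _⟩ => ?_, fun h => ?_⟩
  · obtain ⟨M, hM⟩ := hnu.2
    have hlamM : ∀ i, M ≤ i → lam i = 0 := fun i hi => by simpa [hM i hi] using hle i
    rw [partSize_eq_sum_range hM, partSize_eq_sum_range hlamM, add_zero, eq_comm,
      sum_eq_sum_iff_of_le fun i _ => hle i] at hsize
    funext i
    by_cases hi : i < M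
    · exact (hsize i (mem_range.2 hi)).symm
    · rw [hM i (not_lt.1 hi), hlamM i (not_lt.1 hi)]
  · rw [Set.mem_singleton_iff.1 h]
    exact ⟨hlam, fun _ => le_rfl, rfl, fun i => hlam.1 i.le_succ⟩

lemma apply_zero_ne_zero_of_mem_stripsAbove {lam nu : ℕ → ℕ} {r : ℕ} (hr : r ≠ 0)
    (hnu : nu ∈ stripsAbove lam r) : nu 0 ≠ 0 := by
  intro h0
  have hzero : nu = fun _ => 0 :=
    funext fun i => Nat.eq_zero_of_le_zero (h0 ▸ hnu.1.1 (Nat.zero_le i))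
  have hsize := hnu.2.2.1
  rw [hzero, partSize_eq_sum_range (M := 0) fun _ _ => rfl] at hsize
  simp at hsize
  omega

lemma boundedSchur_zero_oneRow_mul (N r : ℕ) {lam : ℕ → ℕ} (hlam : IsPartition lam) :
    boundedSchur N 0 (oneRow r) * boundedSchur N 0 lam =
      ∑ᶠ nu ∈ stripsAbove lam r, boundedSchur N 0 nu := by
  rcases Nat.eq_zero_or_pos r with rfl | hr
  · rw [oneRow_zero, boundedSchur_empty, one_mul, stripsAbove_zero hlam, finsum_mem_singleton]
  · rw [boundedSchur_zero_of_ne_zero N (by simp [oneRow]; omega), zero_mul, eq_comm]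
    exact finsum_mem_of_eqOn_zero fun nu hnu =>
      boundedSchur_zero_of_ne_zero N (apply_zero_ne_zero_of_mem_stripsAbove hr.ne' hnu)

lemma boundedSchur_succ_oneRow {N K : ℕ} (hK : K < N) (r : ℕ) :
    boundedSchur N (K + 1) (oneRow r) =
      ∑ᶠ k ∈ Set.Iic r, boundedSchur N K (oneRow k) * X (⟨K, hK⟩ : Fin N) ^ (r - k) := by
  rw [boundedSchur_succ hK (isPartition_oneRow r), stripsBelow_oneRow,
    finsum_mem_image oneRow_injective.injOn]
  simp only [partSize_oneRow]

lemma boundedSchur_succ_oneRow_mul {N K : ℕ} (hK : K < N)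
    (ih : ∀ r lam, IsPartition lam →
      boundedSchur N K (oneRow r) * boundedSchur N K lam =
        ∑ᶠ nu ∈ stripsAbove lam r, boundedSchur N K nu)
    (r : ℕ) {lam : ℕ → ℕ} (hlam : IsPartition lam) :
    boundedSchur N (K + 1) (oneRow r) * boundedSchur N (K + 1) lam =
      ∑ᶠ mu ∈ stripsBelow lam, ∑ᶠ rho ∈ stripsAboveUpTo mu r,
        boundedSchur N K rho * X (⟨K, hK⟩ : Fin N) ^ (partSize lam + r - partSize rho) := by
  obtain ⟨M, hM⟩ := hlam.2
  rw [boundedSchur_succ_oneRow hK, boundedSchur_succ hK hlam, mul_finsum_mem]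
  refine finsum_mem_congr rfl fun mu hmu => ?_
  have hmu_le : partSize mu ≤ partSize lam := partSize_mono hM hmu.2.1
  rw [finsum_mem_stripsAboveUpTo hmu.1, finsum_mem_mul]
  refine finsum_mem_congr rfl fun k hk => ?_
  have hkr : k ≤ r := hk
  calc boundedSchur N K (oneRow k) * X ⟨K, hK⟩ ^ (r - k) *
        (boundedSchur N K mu * X ⟨K, hK⟩ ^ (partSize lam - partSize mu))
      = boundedSchur N K (oneRow k) * boundedSchur N K mu *
          X ⟨K, hK⟩ ^ (partSize lam + r - (partSize mu + k)) := by
        rw [show partSize lam + r - (partSize mu + k) = r - k + (partSize lam - partSize mu) by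
          omega, pow_add]
        ring
    _ = _ := by
        rw [ih k mu hmu.1, finsum_mem_mul]
        exact finsum_mem_congr rfl fun rho hrho => by rw [hrho.2.2.1]

theorem boundedSchur_oneRow_mul {N K : ℕ} (hK : K ≤ N) (r : ℕ) {lam : ℕ → ℕ}
    (hlam : IsPartition lam) :
    boundedSchur N K (oneRow r) * boundedSchur N K lam =
      ∑ᶠ nu ∈ stripsAbove lam r, boundedSchur N K nu := by
  induction K generalizing r lam with
  | zero => exact boundedSchur_zero_oneRow_mul N r hlam
  | succ K ih =>
    have hK' : K < N := hK
    rw [boundedSchur_succ_oneRow_mul hK' (fun r _ h => ih hK'.le r h) r hlam,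
      finsum_stripsBelow_stripsAboveUpTo hlam]
    exact finsum_mem_congr rfl fun nu hnu => by rw [boundedSchur_succ hK' hnu.1, hnu.2.2.1]

end Pieri

theorem pieri_rule_general (N r : ℕ) (lam : ℕ → ℕ) (hlam : IsPartition lam) :
    schurPoly N (oneRow r) * schurPoly N lam =
      ∑ᶠ nu ∈ {nu : ℕ → ℕ | IsPartition nu ∧ (∀ i, lam i ≤ nu i) ∧
          partSize nu = partSize lam + r ∧ ∀ i, nu (i + 1) ≤ lam i},
        schurPoly N nu :=
  Pieri.boundedSchur_oneRow_mul le_rfl r hlam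

/-- Pieri rule: `s_(r) · s_λ = Σ_ν s_ν`, summed over all partitions `ν ⊇ λ` with
`|ν| = |λ| + r` such that `ν/λ` is a horizontal strip (`ν_{i+1} ≤ λ_i` for all `i`). -/
theorem pieri_rule (N r : ℕ) (hN : 1 ≤ N) (hr : 1 ≤ r)
    (lam : ℕ → ℕ) (hlam : IsPartition lam) :
    schurPoly N (oneRow r) * schurPoly N lam =
      ∑ᶠ nu ∈ {nu : ℕ → ℕ | IsPartition nu ∧ (∀ i, lam i ≤ nu i) ∧
          partSize nu = partSize lam + r ∧ ∀ i, nu (i + 1) ≤ lam i},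
        schurPoly N nu :=
  pieri_rule_general N r lam hlam
end

section
/- For every N ≥ 1, the family of Schur polynomials { s_λ(x_1,…,x_N) : λ a partition with at most N nonzero parts } is a basis of the ℤ-module of symmetric polynomials in ℤ[x_1,…,x_N]. -/
open MvPolynomial

open Finset

/-!
The coefficient of `x^μ` in `s_λ` counts the tableaux of shape `λ` and content `μ`. The entries of
row `i` are at least `i + 1`, so the content of a tableau is lexicographically at most `λ`, with
equality only for the tableau whose row `i` is filled with `i + 1`: `s_λ` has lex-leading monomial
`x^λ` with coefficient `1`. The Bender–Knuth involution exchanges the numbers of entries `k` and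
`k + 1` by rewriting, in each row, the entries `k`, `k + 1` that do not sit in a vertical pair `k`
over `k + 1`; hence `s_λ` is invariant under adjacent transpositions, i.e. symmetric. Conversely the
lex-leading exponent of a symmetric polynomial is weakly decreasing, i.e. a partition, so the Schur
polynomials are a unitriangular family that reaches every leading exponent, hence a basis.
-/

/-! ### Unitriangular families with respect to a monomial order -/

namespace MonomialOrder

variable {σ R ι : Type*} [CommRing R] (m : MonomialOrder σ)

theorem degree_eq_of_coeff_eq_one [Nontrivial R] {f : MvPolynomial σ R} {d : σ →₀ ℕ}
    (hd : f.coeff d = 1) (hle : ∀ e ∈ f.support, e ≼[m] d) : m.degree f = d := by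
  have hdf : d ∈ f.support := by simp [hd]
  exact m.toSyn.injective <| le_antisymm (m.degree_le_iff.2 hle) (m.le_degree hdf)

theorem monic_of_coeff_eq_one [Nontrivial R] {f : MvPolynomial σ R} {d : σ →₀ ℕ}
    (hd : f.coeff d = 1) (hle : ∀ e ∈ f.support, e ≼[m] d) : m.Monic f := by
  rw [Monic, leadingCoeff, m.degree_eq_of_coeff_eq_one hd hle, hd]

theorem linearIndependent_of_monic {b : ι → MvPolynomial σ R} (hb : ∀ i, m.Monic (b i))
    (hinj : Function.Injective fun i => m.degree (b i)) : LinearIndependent R b := by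
  rw [linearIndependent_iff]
  intro l hl
  by_contra hne
  obtain ⟨i, hi, hmax⟩ := l.support.exists_max_image (fun i => m.toSyn (m.degree (b i)))
    (Finsupp.support_nonempty_iff.2 hne)
  have hcoeff : (Finsupp.linearCombination R b l).coeff (m.degree (b i)) = l i := by
    rw [Finsupp.linearCombination_apply, Finsupp.sum, coeff_sum, Finset.sum_eq_single i]
    · rw [coeff_smul, (hb i).coeff_degree, smul_eq_mul, mul_one]
    · intro j hj hji
      rw [coeff_smul, m.coeff_eq_zero_of_lt, smul_zero]
      exact (hmax j hj).lt_of_ne fun h => hji (hinj (m.toSyn.injective h))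
    · exact fun h => absurd hi h
  rw [hl, coeff_zero] at hcoeff
  exact Finsupp.mem_support_iff.1 hi hcoeff.symm

theorem le_span_of_monic {b : ι → MvPolynomial σ R} {S : Submodule R (MvPolynomial σ R)}
    (hbS : ∀ i, b i ∈ S) (hb : ∀ i, m.Monic (b i))
    (hdeg : ∀ f ∈ S, f ≠ 0 → ∃ i, m.degree (b i) = m.degree f) :
    S ≤ Submodule.span R (Set.range b) := by
  suffices ∀ a : m.syn, ∀ f ∈ S, m.toSyn (m.degree f) = a → f ∈ Submodule.span R (Set.range b)
    from fun f hf => this _ f hf rfl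
  intro a
  induction a using WellFoundedLT.induction with
  | ind a ih =>
    rintro f hf rfl
    by_cases hf0 : f = 0
    · exact hf0 ▸ Submodule.zero_mem _
    obtain ⟨i, hi⟩ := hdeg f hf hf0
    set g := f - m.leadingCoeff f • b i
    have hg : g ∈ Submodule.span R (Set.range b) := by
      by_cases hg0 : g = 0
      · exact hg0 ▸ Submodule.zero_mem _
      refine ih _ ?_ g (S.sub_mem hf (S.smul_mem _ (hbS i))) rfl
      have hle : m.degree g ≼[m] m.degree f :=
        m.degree_sub_le.trans (sup_le le_rfl (hi ▸ m.degree_smul_le))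
      refine hle.lt_of_ne fun h => hg0 ?_
      rw [← m.coeff_degree_eq_zero_iff, m.toSyn.injective h, coeff_sub, coeff_smul, ← hi,
        (hb i).coeff_degree, hi, smul_eq_mul, mul_one, leadingCoeff, sub_self]
    have hfg : f = g + m.leadingCoeff f • b i := (sub_add_cancel _ _).symm
    rw [hfg]
    exact Submodule.add_mem _ hg (Submodule.smul_mem _ _ (Submodule.subset_span ⟨i, rfl⟩))

end MonomialOrder

section

variable {σ R : Type*} [CommRing R]

theorem MvPolynomial.IsSymmetric.antitone_degree_lex [LinearOrder σ] [WellFoundedGT σ]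
    {f : MvPolynomial σ R} (hf : f.IsSymmetric) :
    Antitone (MonomialOrder.lex.degree f) := by
  intro u v huv
  set d := MonomialOrder.lex.degree f
  by_contra! hlt
  have huv' : u < v := huv.lt_of_ne (by rintro rfl; exact hlt.false)
  have hf0 : f ≠ 0 := by rintro rfl; simp [d] at hlt
  have hmem : Finsupp.mapDomain (Equiv.swap u v) d ∈ f.support := by
    rw [mem_support_iff, ← hf (Equiv.swap u v), coeff_rename_mapDomain _ (Equiv.injective _)]
    exact MonomialOrder.lex.coeff_degree_ne_zero_iff.2 hf0
  have hgt : toLex d < toLex (Finsupp.mapDomain (Equiv.swap u v) d) := by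
    refine Finsupp.Lex.lt_iff.2 ⟨u, fun w hw => ?_, ?_⟩ <;>
      simp only [ofLex_toLex, Finsupp.mapDomain_equiv_apply, Equiv.symm_swap]
    · rw [Equiv.swap_apply_of_ne_of_ne hw.ne (hw.trans huv').ne]
    · rwa [Equiv.swap_apply_left]
  exact (MonomialOrder.lex.le_degree hmem).not_gt hgt

end

theorem Finset.eq_Ico_of_forall_le_of_downward_closed {S : Finset ℕ} {a : ℕ}
    (hS : ∀ j ∈ S, a ≤ j) (hdown : ∀ j ∈ S, ∀ j', a ≤ j' → j' ≤ j → j' ∈ S) :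
    S = Ico a (a + #S) := by
  refine eq_of_subset_of_card_le (fun j hj => mem_Ico.2 ⟨hS j hj, ?_⟩) (by simp)
  have := card_le_card fun j' (hj' : j' ∈ Icc a j) =>
    hdown j hj j' (mem_Icc.1 hj').1 (mem_Icc.1 hj').2
  rw [Nat.card_Icc] at this
  omega

theorem Finset.eq_Ico_of_forall_lt_of_upward_closed {S : Finset ℕ} {b : ℕ}
    (hS : ∀ j ∈ S, j < b) (hup : ∀ j ∈ S, ∀ j', j ≤ j' → j' < b → j' ∈ S) :
    S = Ico (b - #S) b := by
  have hcard : #S ≤ b := by simpa using card_le_card fun j hj => mem_range.2 (hS j hj)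
  refine eq_of_subset_of_card_le (fun j hj => mem_Ico.2 ⟨?_, hS j hj⟩) (by simp; omega)
  have := card_le_card fun j' (hj' : j' ∈ Ico j b) =>
    hup j hj j' (mem_Ico.1 hj').1 (mem_Ico.1 hj').2
  rw [Nat.card_Ico] at this
  omega

theorem Finset.card_filter_range_of_iff {n a b : ℕ} {P : ℕ → Prop} [DecidablePred P]
    (hb : b ≤ n) (h : ∀ j < n, P j ↔ a ≤ j ∧ j < b) : #{j ∈ range n | P j} = b - a := by
  rw [← Nat.card_Ico]
  congr 1
  ext j
  simp only [mem_filter, mem_range, mem_Ico]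
  exact ⟨fun ⟨hj, hP⟩ => (h j hj).1 hP, fun hj => ⟨by omega, (h j (by omega)).2 hj⟩⟩

namespace Schur

variable {N : ℕ} {lam : ℕ → ℕ} {T : ℕ × ℕ → ℕ} {i j k m : ℕ}

/-! ### Tableaux and the leading monomial of `s_λ` -/

def IsSSYT (lam : ℕ → ℕ) (T : ℕ × ℕ → ℕ) : Prop :=
  IsSkewSSYT (fun _ => 0) lam T

def ssyts (N : ℕ) (lam : ℕ → ℕ) : Set (ℕ × ℕ → ℕ) :=
  {T | IsSSYT lam T ∧ ∀ p, T p ≤ N}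

namespace IsSSYT

variable (hT : IsSSYT lam T)
include hT

theorem pos (hj : j < lam i) : 0 < T (i, j) :=
  hT.1 _ ⟨Nat.zero_le _, hj⟩

theorem eq_zero {p : ℕ × ℕ} (hp : ¬ p.2 < lam p.1) : T p = 0 :=
  hT.2.1 p fun h => hp h.2

theorem ne_zero_iff {p : ℕ × ℕ} : T p ≠ 0 ↔ p.2 < lam p.1 :=
  ⟨fun h => by_contra fun hp => h (hT.eq_zero hp), fun hp => (hT.pos hp).ne'⟩

theorem row_mono (hjj' : j ≤ j') (hj' : j' < lam i) : T (i, j) ≤ T (i, j') :=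
  hT.2.2.1 i j j' ⟨Nat.zero_le _, hjj'.trans_lt hj'⟩ hjj' ⟨Nat.zero_le _, hj'⟩

theorem col_strict (hj : j < lam i) (hj' : j < lam (i + 1)) : T (i, j) < T (i + 1, j) :=
  hT.2.2.2 i j ⟨Nat.zero_le _, hj⟩ ⟨Nat.zero_le _, hj'⟩

theorem row_lt (hlam : Antitone lam) (hj : j < lam i) : i < T (i, j) := by
  induction i with
  | zero => exact hT.pos hj
  | succ i ih =>
    have hj' : j < lam i := hj.trans_le (hlam i.le_succ)
    exact Nat.lt_of_le_of_lt (ih hj') (hT.col_strict hj' hj)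

end IsSSYT

theorem _root_.IsPartition.finite_shape (hlam : IsPartition lam) :
    {p : ℕ × ℕ | p.2 < lam p.1}.Finite := by
  obtain ⟨M, hM⟩ := hlam.2
  refine ((Set.finite_Iio M).prod (Set.finite_Iio (lam 0))).subset fun ⟨i, j⟩ hp => ?_
  have hp : j < lam i := hp
  refine ⟨Set.mem_Iio.2 (by_contra fun hi => ?_), hp.trans_le (hlam.1 (Nat.zero_le i))⟩
  rw [hM i (not_lt.1 hi)] at hp
  exact Nat.not_lt_zero _ hp

theorem finite_ssyts (hlam : IsPartition lam) : (ssyts N lam).Finite := by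
  have : Finite {p : ℕ × ℕ | p.2 < lam p.1} := hlam.finite_shape
  rw [← Set.finite_coe_iff]
  refine Finite.of_injective
    (fun (T : ssyts N lam) (p : {p : ℕ × ℕ | p.2 < lam p.1}) =>
      (⟨T.1 p, Nat.lt_succ_of_le (T.2.2 p)⟩ : Fin (N + 1))) fun T T' h => ?_
  ext p
  by_cases hp : p.2 < lam p.1
  · exact congrArg Fin.val (congrFun h ⟨p, hp⟩)
  · rw [T.2.1.eq_zero hp, T'.2.1.eq_zero hp]

noncomputable def content (N : ℕ) (T : ℕ × ℕ → ℕ) : Fin N →₀ ℕ :=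
  Finsupp.equivFunOnFinite.symm fun i => entryCount T (i + 1)

@[simp] theorem content_apply (x : Fin N) : content N T x = entryCount T (x + 1) := rfl

theorem tabWeight_eq_monomial : tabWeight N T = monomial (content N T) 1 := by
  rw [tabWeight, monomial_eq, C_1, one_mul, Finsupp.prod_fintype _ _ fun _ => pow_zero _]
  rfl

theorem schurPoly_eq_sum (hlam : IsPartition lam) :
    schurPoly N lam = ∑ T ∈ (finite_ssyts (N := N) hlam).toFinset, monomial (content N T) 1 := by
  simp_rw [← tabWeight_eq_monomial]
  rw [schurPoly, ← finsum_mem_coe_finset, Set.Finite.coe_toFinset]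
  rfl

theorem coeff_schurPoly (hlam : IsPartition lam) (d : Fin N →₀ ℕ) :
    (schurPoly N lam).coeff d = #{T ∈ (finite_ssyts (N := N) hlam).toFinset | content N T = d} := by
  rw [schurPoly_eq_sum hlam, coeff_sum, natCast_card_filter]
  exact sum_congr rfl fun T _ => coeff_monomial _ _ _

noncomputable def exponent (N : ℕ) (lam : ℕ → ℕ) : Fin N →₀ ℕ :=
  Finsupp.equivFunOnFinite.symm fun i => lam i

@[simp] theorem exponent_apply (x : Fin N) : exponent N lam x = lam x := rfl

def canonicalTableau (lam : ℕ → ℕ) : ℕ × ℕ → ℕ :=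
  fun p => if p.2 < lam p.1 then p.1 + 1 else 0

theorem canonicalTableau_mem_ssyts (hN : ∀ i, N ≤ i → lam i = 0) :
    canonicalTableau lam ∈ ssyts N lam := by
  refine ⟨⟨fun p hp => ?_, fun p hp => ?_, fun i j j' hj _ hj' => ?_, fun i j hj hj' => ?_⟩,
    fun ⟨i, j⟩ => ?_⟩ <;> simp only [canonicalTableau, InSkewShape] at *
  · simp [hp.2]
  · rw [if_neg fun h => hp ⟨Nat.zero_le _, h⟩]
  · simp [hj.2, hj'.2]
  · simp [hj.2, hj'.2]
  · split_ifs with h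
    · by_contra! hi
      rw [hN i (by omega)] at h
      exact Nat.not_lt_zero _ h
    · exact Nat.zero_le _

theorem canonicalTableau_eq_succ_iff : canonicalTableau lam (i, j) = m + 1 ↔ i = m ∧ j < lam m := by
  change (if j < lam i then i + 1 else 0) = m + 1 ↔ _
  split_ifs with h
  · refine ⟨fun hm => ?_, fun ⟨hi, _⟩ => by rw [hi]⟩
    obtain rfl : i = m := by omega
    exact ⟨rfl, h⟩
  · exact ⟨False.elim, fun ⟨hi, h'⟩ => absurd (hi ▸ h') h⟩

theorem entryCount_canonicalTableau (m : ℕ) :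
    entryCount (canonicalTableau lam) (m + 1) = lam m := by
  have : {p | canonicalTableau lam p = m + 1} =
      (({m} ×ˢ range (lam m) : Finset (ℕ × ℕ)) : Set (ℕ × ℕ)) := by
    ext ⟨i, j⟩
    simp only [Set.mem_ofPred_eq, coe_product, coe_singleton, coe_range, Set.mem_prod,
      Set.mem_singleton_iff, Set.mem_Iio, canonicalTableau_eq_succ_iff]
  rw [entryCount, this, Set.ncard_coe_finset, card_product, card_singleton, card_range, one_mul]

theorem content_canonicalTableau : content N (canonicalTableau lam) = exponent N lam := by
  ext x
  rw [content_apply, exponent_apply, entryCount_canonicalTableau]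

theorem setOf_eq_succ_subset_row (hT : IsSSYT lam T) (hlam : Antitone lam)
    (hrows : ∀ t < k, ∀ j < lam t, T (t, j) = t + 1) :
    {p | T p = k + 1} ⊆ (({k} ×ˢ range (lam k) : Finset (ℕ × ℕ)) : Set _) := by
  rintro ⟨i, j⟩ (hp : T (i, j) = k + 1)
  have hj : j < lam i := (hT.ne_zero_iff (p := (i, j))).1 (by omega)
  have hik : i ≤ k := by have := hT.row_lt hlam hj; omega
  have hki : ¬ i < k := fun hi => by have := hrows i hi j hj; omega
  obtain rfl : i = k := by omega
  simpa using hj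

theorem entryCount_succ_le (hT : IsSSYT lam T) (hlam : Antitone lam)
    (hrows : ∀ t < k, ∀ j < lam t, T (t, j) = t + 1) : entryCount T (k + 1) ≤ lam k := by
  have := Set.ncard_le_ncard (setOf_eq_succ_subset_row hT hlam hrows)
  rwa [Set.ncard_coe_finset, card_product, card_singleton, card_range, one_mul] at this

theorem rows_eq_of_entryCount (hT : IsSSYT lam T) (hlam : Antitone lam)
    (hc : ∀ t < k, entryCount T (t + 1) = lam t) : ∀ t < k, ∀ j < lam t, T (t, j) = t + 1 := by
  induction k with
  | zero => exact fun t ht => absurd ht (Nat.not_lt_zero t)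
  | succ k ih =>
    have hrows := ih fun t ht => hc t (by omega)
    intro t ht j hj
    rcases (Nat.lt_succ_iff_lt_or_eq.1 ht) with ht | rfl
    · exact hrows t ht j hj
    have hsub := setOf_eq_succ_subset_row hT hlam hrows
    have heq := Set.eq_of_subset_of_ncard_le hsub (by
      rw [Set.ncard_coe_finset, card_product, card_singleton, card_range, one_mul]
      exact (hc t (Nat.lt_succ_self t)).ge)
    show (t, j) ∈ {p | T p = t + 1}
    rw [heq]
    simpa using hj

theorem content_le_exponent (hT : IsSSYT lam T) (hlam : Antitone lam) :
    toLex (content N T) ≤ toLex (exponent N lam) := by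
  refine not_lt.1 fun hlt => ?_
  obtain ⟨x, hbefore, hx⟩ := Finsupp.Lex.lt_iff.1 hlt
  have hrows := rows_eq_of_entryCount (k := x) hT hlam fun t ht =>
    (hbefore ⟨t, by omega⟩ ht).symm
  exact (entryCount_succ_le hT hlam hrows).not_gt hx

theorem eq_canonicalTableau (hT : IsSSYT lam T) (hlam : Antitone lam)
    (hN : ∀ i, N ≤ i → lam i = 0) (hc : content N T = exponent N lam) :
    T = canonicalTableau lam := by
  have hrows := rows_eq_of_entryCount (k := N) hT hlam fun t ht => by
    simpa using congrArg (· ⟨t, ht⟩) hc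
  funext ⟨i, j⟩
  unfold canonicalTableau
  split_ifs with hj
  · exact hrows i (by_contra fun hi => by rw [hN i (not_lt.1 hi)] at hj; omega) j hj
  · exact hT.eq_zero hj

theorem coeff_schurPoly_exponent (hlam : IsPartition lam) (hN : ∀ i, N ≤ i → lam i = 0) :
    (schurPoly N lam).coeff (exponent N lam) = 1 := by
  rw [coeff_schurPoly hlam, Nat.cast_eq_one, card_eq_one]
  refine ⟨canonicalTableau lam, ext fun T => ?_⟩
  simp only [mem_filter, Set.Finite.mem_toFinset, mem_singleton]
  constructor
  · exact fun ⟨hT, hc⟩ => eq_canonicalTableau hT.1 hlam.1 hN hc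
  · rintro rfl
    exact ⟨canonicalTableau_mem_ssyts hN, content_canonicalTableau⟩

theorem le_exponent_of_mem_support (hlam : IsPartition lam) :
    ∀ d ∈ (schurPoly N lam).support, toLex d ≤ toLex (exponent N lam) := by
  intro d hd
  rw [mem_support_iff, coeff_schurPoly hlam, Nat.cast_ne_zero, ← pos_iff_ne_zero,
    card_pos] at hd
  obtain ⟨T, hT⟩ := hd
  rw [mem_filter, Set.Finite.mem_toFinset] at hT
  exact hT.2 ▸ content_le_exponent hT.1.1 hlam.1

/-! ### The Bender–Knuth involution -/

def IsPair (T : ℕ × ℕ → ℕ) (k : ℕ) (p : ℕ × ℕ) : Prop :=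
  T p = k ∧ T (p.1 + 1, p.2) = k + 1

def IsFree (T : ℕ × ℕ → ℕ) (k : ℕ) (p : ℕ × ℕ) : Prop :=
  (T p = k ∨ T p = k + 1) ∧ ¬ IsPair T k p ∧ ¬ (0 < p.1 ∧ IsPair T k (p.1 - 1, p.2))

instance (T : ℕ × ℕ → ℕ) (k : ℕ) (p : ℕ × ℕ) : Decidable (IsFree T k p) := by
  unfold IsFree IsPair; infer_instance

def rowNumLE (lam : ℕ → ℕ) (T : ℕ × ℕ → ℕ) (m i : ℕ) : ℕ :=
  #{j ∈ range (lam i) | T (i, j) ≤ m}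

def rowNumFree (lam : ℕ → ℕ) (T : ℕ × ℕ → ℕ) (k v i : ℕ) : ℕ :=
  #{j ∈ range (lam i) | IsFree T k (i, j) ∧ T (i, j) = v}

/-- In row `i` the free cells hold `k^a (k+1)^b` in the columns `[r - a, r + b)`, where `r` counts
the entries `≤ k` and `a`, `b` the free `k`s and `k + 1`s; the move rewrites this block as
`k^b (k+1)^a`. -/
def benderKnuth (lam : ℕ → ℕ) (k : ℕ) (T : ℕ × ℕ → ℕ) : ℕ × ℕ → ℕ := fun p =>
  if IsFree T k p then
    if p.2 + rowNumFree lam T k k p.1 < rowNumLE lam T k p.1 + rowNumFree lam T k (k + 1) p.1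
    then k else k + 1
  else T p

theorem isFree_and_eq_iff {p : ℕ × ℕ} :
    IsFree T k p ∧ T p = k ↔ T p = k ∧ T (p.1 + 1, p.2) ≠ k + 1 := by
  obtain ⟨_ | i, j⟩ := p <;> simp only [IsFree, IsPair, Nat.add_sub_cancel] <;> omega

theorem isFree_and_eq_succ_iff {p : ℕ × ℕ} :
    IsFree T k p ∧ T p = k + 1 ↔ T p = k + 1 ∧ ¬ (0 < p.1 ∧ T (p.1 - 1, p.2) = k) := by
  obtain ⟨_ | i, j⟩ := p <;> simp only [IsFree, IsPair, Nat.add_sub_cancel] <;> omega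

theorem rowNumLE_le : rowNumLE lam T m i ≤ lam i :=
  (card_filter_le _ _).trans (card_range _).le

theorem rowNumFree_le_rowNumLE : rowNumFree lam T k k i ≤ rowNumLE lam T k i :=
  card_le_card fun j hj => by
    simp only [mem_filter] at hj ⊢
    exact ⟨hj.1, hj.2.2.le⟩

theorem eq_iff_isPair_of_not_isFree {p : ℕ × ℕ} (h : ¬ IsFree T k p) :
    T p = k ↔ IsPair T k p := by
  obtain ⟨_ | i, j⟩ := p <;> simp only [IsFree, IsPair, Nat.add_sub_cancel] at h ⊢ <;> omega

theorem eq_succ_iff_of_not_isFree {p : ℕ × ℕ} (h : ¬ IsFree T k p) :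
    T p = k + 1 ↔ 0 < p.1 ∧ IsPair T k (p.1 - 1, p.2) := by
  obtain ⟨_ | i, j⟩ := p <;> simp only [IsFree, IsPair, Nat.add_sub_cancel] at h ⊢ <;> omega

theorem benderKnuth_of_not_isFree {p : ℕ × ℕ} (h : ¬ IsFree T k p) :
    benderKnuth lam k T p = T p :=
  if_neg h

theorem benderKnuth_of_isFree {p : ℕ × ℕ} (h : IsFree T k p) :
    benderKnuth lam k T p =
      if p.2 + rowNumFree lam T k k p.1 < rowNumLE lam T k p.1 + rowNumFree lam T k (k + 1) p.1
      then k else k + 1 :=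
  if_pos h

theorem benderKnuth_eq_or_eq_succ_iff {p : ℕ × ℕ} :
    benderKnuth lam k T p = k ∨ benderKnuth lam k T p = k + 1 ↔ T p = k ∨ T p = k + 1 := by
  by_cases hf : IsFree T k p
  · simp only [benderKnuth, if_pos hf]
    split_ifs <;> simp [hf.1]
  · rw [benderKnuth_of_not_isFree hf]

theorem entryCount_benderKnuth_of_ne {v : ℕ} (hv : v ≠ k) (hv' : v ≠ k + 1) :
    entryCount (benderKnuth lam k T) v = entryCount T v := by
  unfold entryCount
  congr 1
  ext p
  by_cases hf : IsFree T k p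
  · have := hf.1
    simp only [Set.mem_ofPred_eq, benderKnuth_of_isFree hf]
    split_ifs <;> omega
  · simp only [Set.mem_ofPred_eq, benderKnuth_of_not_isFree hf]

theorem setOf_benderKnuth_eq_self : {p | benderKnuth lam k T p = k} =
    {p | IsPair T k p} ∪ {p | IsFree T k p ∧ benderKnuth lam k T p = k} := by
  ext p
  by_cases hf : IsFree T k p
  · simp [hf, hf.2.1]
  · simp [hf, benderKnuth_of_not_isFree hf, eq_iff_isPair_of_not_isFree hf]

theorem setOf_eq_succ : {p | T p = k + 1} =
    (fun p => (p.1 + 1, p.2)) '' {p | IsPair T k p} ∪ {p | IsFree T k p ∧ T p = k + 1} := by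
  ext ⟨i, j⟩
  by_cases hf : IsFree T k (i, j)
  · simp only [Set.mem_ofPred_eq, Set.mem_union, Set.mem_image, Prod.mk.injEq, Prod.exists,
      hf, true_and]
    refine ⟨Or.inr, ?_⟩
    rintro (⟨i, j, hp, rfl, rfl⟩ | h)
    · exact absurd ⟨i.succ_pos, by simpa using hp⟩ hf.2.2
    · exact h
  · simp only [Set.mem_ofPred_eq, Set.mem_union, Set.mem_image, Prod.mk.injEq, Prod.exists,
      hf, false_and, or_false, eq_succ_iff_of_not_isFree hf]
    constructor
    · rintro ⟨hi, hp⟩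
      exact ⟨i - 1, j, hp, by omega, rfl⟩
    · rintro ⟨i, j, hp, rfl, rfl⟩
      exact ⟨i.succ_pos, by simpa using hp⟩

namespace IsSSYT

variable (hT : IsSSYT lam T)
include hT

theorem lt_of_isFree (hk : 0 < k) {p : ℕ × ℕ} (h : IsFree T k p) : p.2 < lam p.1 :=
  hT.ne_zero_iff.1 (by rcases h.1 with h | h <;> omega)

theorem lt_rowNumLE_iff (hj : j < lam i) : j < rowNumLE lam T m i ↔ T (i, j) ≤ m := by
  have hS := eq_Ico_of_forall_le_of_downward_closed (S := {j ∈ range (lam i) | T (i, j) ≤ m})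
    (a := 0) (fun _ _ => Nat.zero_le _) fun j hj j' _ hj'j => by
      simp only [mem_filter, mem_range] at hj ⊢
      exact ⟨by omega, (hT.row_mono hj'j hj.1).trans hj.2⟩
  have := Finset.ext_iff.1 hS j
  simp only [mem_filter, mem_range, mem_Ico, zero_add, zero_le, true_and, hj] at this
  exact this.symm

theorem isFree_and_eq_iff_of_lt (hj : j < lam i) :
    IsFree T k (i, j) ∧ T (i, j) = k ↔
      rowNumLE lam T k i ≤ j + rowNumFree lam T k k i ∧ j < rowNumLE lam T k i := by
  set S := {j ∈ range (lam i) | IsFree T k (i, j) ∧ T (i, j) = k}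
  have hS : S = Ico (rowNumLE lam T k i - #S) (rowNumLE lam T k i) := by
    refine eq_Ico_of_forall_lt_of_upward_closed (fun j hj => ?_) fun j hj j' hjj' hj' => ?_ <;>
      simp only [S, mem_filter, mem_range, isFree_and_eq_iff] at hj ⊢
    · exact (hT.lt_rowNumLE_iff hj.1).2 hj.2.1.le
    have hj'lam : j' < lam i := hj'.trans_le rowNumLE_le
    have : T (i, j') ≤ k := (hT.lt_rowNumLE_iff hj'lam).1 hj'
    have := hT.row_mono hjj' hj'lam
    refine ⟨hj'lam, by omega, fun hbelow => hj.2.2 ?_⟩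
    have hj'below : j' < lam (i + 1) := (hT.ne_zero_iff (p := (i + 1, j'))).1 (by omega)
    have := hT.row_mono hjj' hj'below
    have := hT.col_strict hj.1 (hjj'.trans_lt hj'below)
    omega
  have hcard : #S ≤ rowNumLE lam T k i := rowNumFree_le_rowNumLE
  have := Finset.ext_iff.1 hS j
  simp only [S, mem_filter, mem_range, mem_Ico] at this
  rw [rowNumFree]
  constructor
  · intro h; have := this.1 ⟨hj, h⟩; omega
  · intro h; exact (this.2 (by omega)).2

theorem rowNumLE_add_rowNumFree_le :
    rowNumLE lam T k i + rowNumFree lam T k (k + 1) i ≤ lam i := by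
  have : rowNumFree lam T k (k + 1) i ≤ #(Ico (rowNumLE lam T k i) (lam i)) :=
    card_le_card fun j hj => by
      simp only [mem_filter, mem_range] at hj
      exact mem_Ico.2 ⟨not_lt.1 fun h => by have := (hT.lt_rowNumLE_iff hj.1).1 h; omega, hj.1⟩
  have := rowNumLE_le (lam := lam) (T := T) (m := k) (i := i)
  rw [Nat.card_Ico] at *
  omega

variable (hlam : Antitone lam)
include hlam

theorem isFree_and_eq_succ_iff_of_lt (hj : j < lam i) :
    IsFree T k (i, j) ∧ T (i, j) = k + 1 ↔
      rowNumLE lam T k i ≤ j ∧ j < rowNumLE lam T k i + rowNumFree lam T k (k + 1) i := by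
  set S := {j ∈ range (lam i) | IsFree T k (i, j) ∧ T (i, j) = k + 1}
  have hS : S = Ico (rowNumLE lam T k i) (rowNumLE lam T k i + #S) := by
    refine eq_Ico_of_forall_le_of_downward_closed (fun j hj => ?_) fun j hj j' hj' hj'j => ?_ <;>
      simp only [S, mem_filter, mem_range, isFree_and_eq_succ_iff] at hj ⊢
    · exact not_lt.1 fun h => by have := (hT.lt_rowNumLE_iff hj.1).1 h; omega
    have hj'lam : j' < lam i := hj'j.trans_lt hj.1
    have : ¬ T (i, j') ≤ k := fun h => by have := (hT.lt_rowNumLE_iff hj'lam).2 h; omega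
    have := hT.row_mono hj'j hj.1
    refine ⟨hj'lam, by omega, fun ⟨hi, habove⟩ => hj.2.2 ⟨hi, ?_⟩⟩
    obtain ⟨i, rfl⟩ : ∃ i', i = i' + 1 := ⟨i - 1, by omega⟩
    simp only [Nat.add_sub_cancel] at habove ⊢
    have hjlam : j < lam i := hj.1.trans_le (hlam i.le_succ)
    have := hT.row_mono hj'j hjlam
    have := hT.col_strict hjlam hj.1
    omega
  have := Finset.ext_iff.1 hS j
  simp only [S, mem_filter, mem_range, mem_Ico, hj, true_and] at this
  exact this

theorem isFree_iff_of_lt (hj : j < lam i) :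
    IsFree T k (i, j) ↔ rowNumLE lam T k i ≤ j + rowNumFree lam T k k i ∧
      j < rowNumLE lam T k i + rowNumFree lam T k (k + 1) i := by
  have hk := hT.isFree_and_eq_iff_of_lt (k := k) hj
  have hk1 := hT.isFree_and_eq_succ_iff_of_lt hlam (k := k) hj
  constructor
  · intro h
    rcases h.1 with hv | hv
    · have := hk.1 ⟨h, hv⟩; omega
    · have := hk1.1 ⟨h, hv⟩; omega
  · intro h
    by_cases hr : j < rowNumLE lam T k i
    · exact (hk.2 ⟨h.1, hr⟩).1
    · exact (hk1.2 ⟨not_lt.1 hr, h.2⟩).1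

theorem benderKnuth_cases (hj : j < lam i) :
    (j + rowNumFree lam T k k i < rowNumLE lam T k i ∧
        benderKnuth lam k T (i, j) = T (i, j) ∧ T (i, j) ≤ k) ∨
      (rowNumLE lam T k i ≤ j + rowNumFree lam T k k i ∧
        j + rowNumFree lam T k k i < rowNumLE lam T k i + rowNumFree lam T k (k + 1) i ∧
        benderKnuth lam k T (i, j) = k) ∨
      (rowNumLE lam T k i + rowNumFree lam T k (k + 1) i ≤ j + rowNumFree lam T k k i ∧
        j < rowNumLE lam T k i + rowNumFree lam T k (k + 1) i ∧
        benderKnuth lam k T (i, j) = k + 1) ∨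
      (rowNumLE lam T k i + rowNumFree lam T k (k + 1) i ≤ j ∧
        benderKnuth lam k T (i, j) = T (i, j) ∧ k + 1 ≤ T (i, j)) := by
  have hle := hT.lt_rowNumLE_iff (m := k) hj
  have := rowNumFree_le_rowNumLE (lam := lam) (T := T) (k := k) (i := i)
  by_cases hf : IsFree T k (i, j)
  · have := (hT.isFree_iff_of_lt hlam hj).1 hf
    simp only [benderKnuth, if_pos hf]
    split_ifs <;> omega
  · have := (hT.isFree_iff_of_lt hlam hj).not.1 hf
    rw [benderKnuth_of_not_isFree hf]
    omega

theorem rowNumLE_benderKnuth :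
    rowNumLE lam (benderKnuth lam k T) k i =
      rowNumLE lam T k i + rowNumFree lam T k (k + 1) i - rowNumFree lam T k k i := by
  have := hT.rowNumLE_add_rowNumFree_le (k := k) (i := i)
  rw [rowNumLE, card_filter_range_of_iff (a := 0)
    (b := rowNumLE lam T k i + rowNumFree lam T k (k + 1) i - rowNumFree lam T k k i) (by omega),
    Nat.sub_zero]
  intro j hj
  rcases hT.benderKnuth_cases hlam (k := k) hj with h | h | h | h <;> omega

theorem isFree_and_benderKnuth_eq_iff_of_lt (hj : j < lam i) :
    IsFree T k (i, j) ∧ benderKnuth lam k T (i, j) = k ↔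
      rowNumLE lam T k i ≤ j + rowNumFree lam T k k i ∧
        j + rowNumFree lam T k k i < rowNumLE lam T k i + rowNumFree lam T k (k + 1) i := by
  rw [hT.isFree_iff_of_lt hlam hj]
  rcases hT.benderKnuth_cases hlam (k := k) hj with h | h | h | h <;> omega

variable (hk : 0 < k)
include hk

theorem isPair_of_eq_or_eq_succ (h : T (i, j) = k ∨ T (i, j) = k + 1)
    (h' : T (i + 1, j) = k ∨ T (i + 1, j) = k + 1) : IsPair T k (i, j) := by
  have hj' : j < lam (i + 1) := (hT.ne_zero_iff (p := (i + 1, j))).1 (by omega)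
  have := hT.col_strict (hj'.trans_le (hlam i.le_succ)) hj'
  show T (i, j) = k ∧ T (i + 1, j) = k + 1
  omega

theorem isPair_benderKnuth_iff {p : ℕ × ℕ} :
    IsPair (benderKnuth lam k T) k p ↔ IsPair T k p := by
  obtain ⟨i, j⟩ := p
  constructor
  · intro h
    exact hT.isPair_of_eq_or_eq_succ hlam hk (benderKnuth_eq_or_eq_succ_iff.1 (.inl h.1))
      (benderKnuth_eq_or_eq_succ_iff.1 (.inr h.2))
  · intro h
    have hf : ¬ IsFree T k (i, j) := fun hf => hf.2.1 h
    have hf' : ¬ IsFree T k (i + 1, j) := fun hf => hf.2.2 ⟨i.succ_pos, h⟩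
    exact ⟨(benderKnuth_of_not_isFree hf).trans h.1, (benderKnuth_of_not_isFree hf').trans h.2⟩

theorem isFree_benderKnuth_iff {p : ℕ × ℕ} :
    IsFree (benderKnuth lam k T) k p ↔ IsFree T k p := by
  unfold IsFree
  rw [benderKnuth_eq_or_eq_succ_iff, hT.isPair_benderKnuth_iff hlam hk,
    hT.isPair_benderKnuth_iff hlam hk]

theorem isSSYT_benderKnuth : IsSSYT lam (benderKnuth lam k T) := by
  refine ⟨fun ⟨i, j⟩ hp => ?_, fun p hp => ?_, fun i j j' _ hjj' hp' => ?_, fun i j hp hp' => ?_⟩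
  · have hj : j < lam i := hp.2
    have := hT.pos hj
    rcases hT.benderKnuth_cases hlam (k := k) hj with h | h | h | h <;> omega
  · have hf : ¬ IsFree T k p := fun hf => hp ⟨Nat.zero_le _, hT.lt_of_isFree hk hf⟩
    rw [benderKnuth_of_not_isFree hf]
    exact hT.eq_zero fun h => hp ⟨Nat.zero_le _, h⟩
  · have hj' : j' < lam i := hp'.2
    have := hT.row_mono hjj' hj'
    rcases hT.benderKnuth_cases hlam (k := k) (hjj'.trans_lt hj') with h | h | h | h <;>
    rcases hT.benderKnuth_cases hlam (k := k) hj' with h' | h' | h' | h' <;> omega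
  · have hcol : T (i, j) < T (i + 1, j) := hT.col_strict hp.2 hp'.2
    by_cases hf : IsFree T k (i, j)
    · have hf' : ¬ (T (i + 1, j) = k ∨ T (i + 1, j) = k + 1) :=
        fun h' => hf.2.1 (hT.isPair_of_eq_or_eq_succ hlam hk hf.1 h')
      have := hf.1
      rw [benderKnuth_of_not_isFree fun h => hf' h.1]
      simp only [benderKnuth, if_pos hf]
      split_ifs <;> omega
    by_cases hf' : IsFree T k (i + 1, j)
    · have hT' : ¬ (T (i, j) = k ∨ T (i, j) = k + 1) :=
        fun h => hf'.2.2 ⟨i.succ_pos, hT.isPair_of_eq_or_eq_succ hlam hk h hf'.1⟩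
      have := hf'.1
      rw [benderKnuth_of_not_isFree hf]
      simp only [benderKnuth, if_pos hf']
      split_ifs <;> omega
    rw [benderKnuth_of_not_isFree hf, benderKnuth_of_not_isFree hf']
    exact hcol

theorem rowNumFree_benderKnuth_self :
    rowNumFree lam (benderKnuth lam k T) k k i = rowNumFree lam T k (k + 1) i := by
  have := hT.rowNumLE_add_rowNumFree_le (k := k) (i := i)
  have := rowNumFree_le_rowNumLE (lam := lam) (T := T) (k := k) (i := i)
  rw [rowNumFree, card_filter_range_of_iff
    (a := rowNumLE lam T k i - rowNumFree lam T k k i)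
    (b := rowNumLE lam T k i - rowNumFree lam T k k i + rowNumFree lam T k (k + 1) i) (by omega)]
  · omega
  intro j hj
  rw [hT.isFree_benderKnuth_iff hlam hk, hT.isFree_iff_of_lt hlam hj]
  rcases hT.benderKnuth_cases hlam (k := k) hj with h | h | h | h <;> omega

theorem rowNumFree_benderKnuth_succ :
    rowNumFree lam (benderKnuth lam k T) k (k + 1) i = rowNumFree lam T k k i := by
  have := hT.rowNumLE_add_rowNumFree_le (k := k) (i := i)
  have := rowNumFree_le_rowNumLE (lam := lam) (T := T) (k := k) (i := i)
  rw [rowNumFree, card_filter_range_of_iff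
    (a := rowNumLE lam T k i + rowNumFree lam T k (k + 1) i - rowNumFree lam T k k i)
    (b := rowNumLE lam T k i + rowNumFree lam T k (k + 1) i) (by omega)]
  · omega
  intro j hj
  rw [hT.isFree_benderKnuth_iff hlam hk, hT.isFree_iff_of_lt hlam hj]
  rcases hT.benderKnuth_cases hlam (k := k) hj with h | h | h | h <;> omega

theorem benderKnuth_benderKnuth : benderKnuth lam k (benderKnuth lam k T) = T := by
  funext ⟨i, j⟩
  by_cases hf : IsFree T k (i, j)
  · have hj : j < lam i := hT.lt_of_isFree hk hf
    have := (hT.isFree_iff_of_lt hlam hj).1 hf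
    have := (and_iff_right hf).symm.trans (hT.isFree_and_eq_iff_of_lt (k := k) hj)
    have := hf.1
    have := rowNumFree_le_rowNumLE (lam := lam) (T := T) (k := k) (i := i)
    rw [benderKnuth_of_isFree ((hT.isFree_benderKnuth_iff hlam hk).2 hf)]
    simp only [hT.rowNumLE_benderKnuth hlam, hT.rowNumFree_benderKnuth_self hlam hk,
      hT.rowNumFree_benderKnuth_succ hlam hk]
    split_ifs <;> omega
  · rw [benderKnuth_of_not_isFree ((hT.isFree_benderKnuth_iff hlam hk).not.2 hf),
      benderKnuth_of_not_isFree hf]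

theorem image_isFree_and_benderKnuth_eq :
    (fun p => (p.1, p.2 + rowNumFree lam T k k p.1)) ''
        {p | IsFree T k p ∧ benderKnuth lam k T p = k} =
      {p | IsFree T k p ∧ T p = k + 1} := by
  ext ⟨i, j⟩
  simp only [Set.mem_image, Set.mem_ofPred_eq, Prod.mk.injEq, Prod.exists]
  have := hT.rowNumLE_add_rowNumFree_le (k := k) (i := i)
  have := rowNumFree_le_rowNumLE (lam := lam) (T := T) (k := k) (i := i)
  constructor
  · rintro ⟨i, j', hB, rfl, rfl⟩
    have hj' : j' < lam i := hT.lt_of_isFree hk hB.1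
    have := (hT.isFree_and_benderKnuth_eq_iff_of_lt hlam hj').1 hB
    exact (hT.isFree_and_eq_succ_iff_of_lt hlam (by omega)).2 (by omega)
  · intro hC
    have hj : j < lam i := hT.lt_of_isFree hk hC.1
    have := (hT.isFree_and_eq_succ_iff_of_lt hlam hj).1 hC
    refine ⟨i, j - rowNumFree lam T k k i,
      (hT.isFree_and_benderKnuth_eq_iff_of_lt hlam (by omega)).2 (by omega), rfl, by omega⟩

theorem entryCount_benderKnuth_self :
    entryCount (benderKnuth lam k T) k = entryCount T (k + 1) := by
  -- the untouched pairs `k` over `k + 1` are matched by moving down one row, the free cells by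
  -- moving each row right by its number of free `k`s
  have hdisj : Disjoint {p | IsPair T k p} {p | IsFree T k p ∧ benderKnuth lam k T p = k} :=
    Set.disjoint_left.2 fun _ hp hB => hB.1.2.1 hp
  have hdisj' : Disjoint ((fun p => (p.1 + 1, p.2)) '' {p | IsPair T k p})
      {p | IsFree T k p ∧ T p = k + 1} :=
    Set.disjoint_left.2 fun _ ⟨⟨i, j⟩, hp, heq⟩ hC => by
      subst heq
      exact hC.1.2.2 ⟨i.succ_pos, by simpa using hp⟩
  have hshift : Function.Injective fun p : ℕ × ℕ => (p.1 + 1, p.2) := fun p q h => by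
    simp only [Prod.mk.injEq, add_left_inj] at h
    exact Prod.ext h.1 h.2
  have hrow : Function.Injective fun p : ℕ × ℕ => (p.1, p.2 + rowNumFree lam T k k p.1) :=
    fun p q h => by
      simp only [Prod.mk.injEq] at h
      obtain ⟨h1, h2⟩ := h
      rw [h1] at h2
      exact Prod.ext h1 (by omega)
  rw [entryCount, entryCount, Set.ncard_def, Set.ncard_def, setOf_benderKnuth_eq_self,
    setOf_eq_succ, Set.encard_union_eq hdisj, Set.encard_union_eq hdisj',
    ← hT.image_isFree_and_benderKnuth_eq hlam hk, hshift.encard_image, hrow.encard_image]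

theorem entryCount_benderKnuth_succ :
    entryCount (benderKnuth lam k T) (k + 1) = entryCount T k := by
  have := (hT.isSSYT_benderKnuth hlam hk).entryCount_benderKnuth_self hlam hk
  rwa [hT.benderKnuth_benderKnuth hlam hk, eq_comm] at this

end IsSSYT

/-! ### Symmetry and the basis -/

theorem benderKnuth_mem_ssyts (hT : T ∈ ssyts N lam) (hlam : Antitone lam) (hk : 0 < k)
    (hkN : k < N) : benderKnuth lam k T ∈ ssyts N lam := by
  refine ⟨hT.1.isSSYT_benderKnuth hlam hk, fun p => ?_⟩
  by_cases hf : IsFree T k p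
  · rw [benderKnuth_of_isFree hf]
    split_ifs <;> omega
  · rw [benderKnuth_of_not_isFree hf]
    exact hT.2 p

theorem content_benderKnuth {n : ℕ} (hT : IsSSYT lam T) (hlam : Antitone lam) (x : Fin n) :
    content (n + 1) (benderKnuth lam (x + 1) T) =
      Finsupp.mapDomain (Equiv.swap x.castSucc x.succ) (content (n + 1) T) := by
  ext y
  rw [Finsupp.mapDomain_equiv_apply, Equiv.symm_swap, content_apply, content_apply]
  rcases eq_or_ne y x.castSucc with rfl | h1
  · rw [Equiv.swap_apply_left, Fin.val_castSucc, Fin.val_succ]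
    exact hT.entryCount_benderKnuth_self hlam x.succ_pos
  rcases eq_or_ne y x.succ with rfl | h2
  · rw [Equiv.swap_apply_right, Fin.val_castSucc, Fin.val_succ]
    exact hT.entryCount_benderKnuth_succ hlam x.succ_pos
  rw [Equiv.swap_apply_of_ne_of_ne h1 h2]
  apply entryCount_benderKnuth_of_ne
  · exact fun h => h1 (Fin.ext (by simpa using h))
  · exact fun h => h2 (Fin.ext (by simpa using h))

theorem rename_swap_schurPoly {n : ℕ} (hlam : IsPartition lam) (x : Fin n) :
    rename (Equiv.swap x.castSucc x.succ) (schurPoly (n + 1) lam) = schurPoly (n + 1) lam := by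
  rw [schurPoly_eq_sum hlam, map_sum]
  refine sum_nbij' (benderKnuth lam (x + 1)) (benderKnuth lam (x + 1)) ?_ ?_ ?_ ?_ ?_ <;>
    simp only [Set.Finite.mem_toFinset]
  · exact fun T hT => benderKnuth_mem_ssyts hT hlam.1 x.succ_pos (by omega)
  · exact fun T hT => benderKnuth_mem_ssyts hT hlam.1 x.succ_pos (by omega)
  · exact fun T hT => hT.1.benderKnuth_benderKnuth hlam.1 x.succ_pos
  · exact fun T hT => hT.1.benderKnuth_benderKnuth hlam.1 x.succ_pos
  · intro T hT
    rw [rename_monomial, content_benderKnuth hT.1 hlam.1]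

theorem isSymmetric_schurPoly (hlam : IsPartition lam) : (schurPoly N lam).IsSymmetric := by
  intro σ
  cases N with
  | zero => rw [Subsingleton.elim σ 1, Equiv.Perm.coe_one, rename_id_apply]
  | succ n =>
    have hσ : σ ∈ Submonoid.closure (Set.range fun x : Fin n => Equiv.swap x.castSucc x.succ) := by
      rw [Equiv.Perm.mclosure_swap_castSucc_succ]
      trivial
    induction hσ using Submonoid.closure_induction with
    | mem τ hτ =>
      obtain ⟨x, rfl⟩ := hτ
      exact rename_swap_schurPoly hlam x
    | one => rw [Equiv.Perm.coe_one, rename_id_apply]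
    | mul τ υ _ _ hτ hυ => rw [Equiv.Perm.coe_mul, ← rename_rename, hυ, hτ]

theorem degree_schurPoly (hlam : IsPartition lam) (hN : ∀ i, N ≤ i → lam i = 0) :
    MonomialOrder.lex.degree (schurPoly N lam) = exponent N lam :=
  MonomialOrder.lex.degree_eq_of_coeff_eq_one (coeff_schurPoly_exponent hlam hN)
    (le_exponent_of_mem_support hlam)

theorem monic_schurPoly (hlam : IsPartition lam) (hN : ∀ i, N ≤ i → lam i = 0) :
    MonomialOrder.lex.Monic (schurPoly N lam) :=
  MonomialOrder.lex.monic_of_coeff_eq_one (coeff_schurPoly_exponent hlam hN)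
    (le_exponent_of_mem_support hlam)

abbrev BoundedPartition (N : ℕ) : Type :=
  {l : ℕ → ℕ // IsPartition l ∧ ∀ i, N ≤ i → l i = 0}

theorem exponent_injective : Function.Injective fun l : BoundedPartition N => exponent N l.1 := by
  intro l l' h
  ext i
  by_cases hi : i < N
  · simpa using DFunLike.congr_fun h ⟨i, hi⟩
  · rw [l.2.2 i (not_lt.1 hi), l'.2.2 i (not_lt.1 hi)]

theorem exists_exponent_eq {d : Fin N →₀ ℕ} (hd : Antitone d) :
    ∃ l : BoundedPartition N, exponent N l.1 = d := by
  refine ⟨⟨fun i => if h : i < N then d ⟨i, h⟩ else 0,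
    ⟨fun a b hab => ?_, N, fun i hi => dif_neg (by omega)⟩, fun i hi => dif_neg (by omega)⟩,
    Finsupp.ext fun x => by simp⟩
  by_cases hb : b < N
  · simp only [dif_pos hb, dif_pos (hab.trans_lt hb)]
    exact hd (Fin.mk_le_mk.2 hab)
  · simp only [dif_neg hb, zero_le]

end Schur

set_option synthInstance.maxHeartbeats 1000000 in
theorem schurPoly_basis_general (N : ℕ) :
    ∃ b : Module.Basis {l : ℕ → ℕ // IsPartition l ∧ ∀ i, N ≤ i → l i = 0} ℤ
        (MvPolynomial.symmetricSubalgebra (Fin N) ℤ),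
      ∀ l : {l : ℕ → ℕ // IsPartition l ∧ ∀ i, N ≤ i → l i = 0},
        (b l : MvPolynomial (Fin N) ℤ) = schurPoly N l.val := by
  let S := Subalgebra.toSubmodule (symmetricSubalgebra (Fin N) ℤ)
  have hmem (l : Schur.BoundedPartition N) : schurPoly N l.1 ∈ S :=
    (mem_symmetricSubalgebra _).2 (Schur.isSymmetric_schurPoly l.2.1)
  have hmonic (l : Schur.BoundedPartition N) := Schur.monic_schurPoly l.2.1 l.2.2
  have hdeg (l : Schur.BoundedPartition N) := Schur.degree_schurPoly l.2.1 l.2.2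
  have hli : LinearIndependent ℤ fun l : Schur.BoundedPartition N => schurPoly N l.1 :=
    MonomialOrder.lex.linearIndependent_of_monic hmonic
      (by simpa only [hdeg] using Schur.exponent_injective)
  have hspan :
      S ≤ Submodule.span ℤ (Set.range fun l : Schur.BoundedPartition N => schurPoly N l.1) :=
    MonomialOrder.lex.le_span_of_monic hmem hmonic fun f hf _ =>
      (Schur.exists_exponent_eq ((mem_symmetricSubalgebra f).1 hf).antitone_degree_lex).imp
        fun l hl => (hdeg l).trans hl
  refine ⟨Module.Basis.mk (v := fun l => ⟨schurPoly N l.1, hmem l⟩) (.of_comp S.subtype hli) ?_,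
    fun l => by rw [Module.Basis.mk_apply]⟩
  exact ((Submodule.span_range_subtype_eq_top_iff S hmem).2
    (le_antisymm (Submodule.span_le.2 (Set.range_subset_iff.2 hmem)) hspan)).ge

set_option synthInstance.maxHeartbeats 1000000 in
/-- The Schur polynomials `s_λ(x_1, …, x_N)`, for `λ` ranging over partitions with at most
`N` nonzero parts, form a ℤ-basis of the module of symmetric polynomials
in `ℤ[x_1, …, x_N]`. -/
theorem schurPoly_basis (N : ℕ) (hN : 1 ≤ N) :
    ∃ b : Module.Basis {l : ℕ → ℕ // IsPartition l ∧ ∀ i, N ≤ i → l i = 0} ℤ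
        (MvPolynomial.symmetricSubalgebra (Fin N) ℤ),
      ∀ l : {l : ℕ → ℕ // IsPartition l ∧ ∀ i, N ≤ i → l i = 0},
        (b l : MvPolynomial (Fin N) ℤ) = schurPoly N l.val :=
  schurPoly_basis_general N
end

section
/- For n ≥ 2 and 1 ≤ i ≤ n−1, the divided difference operators ∂_i on ℤ[x_1,…,x_n] satisfy: (a) ∂_i ∘ ∂_j = ∂_j ∘ ∂_i whenever |i − j| > 1; (b) ∂_i ∘ ∂_{i+1} ∘ ∂_i = ∂_{i+1} ∘ ∂_i ∘ ∂_{i+1} whenever 1 ≤ i ≤ n−2; (c) ∂_i ∘ ∂_i = 0. -/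
/-!
Over a domain, `D = ∂_ab P` is determined by `(X a - X b) * D = P - (a b) P`, so every relation
can be checked after clearing denominators. Since `∂_ab P` is `(a b)`-invariant, `∂_ab ∂_ab = 0`.
For disjoint pairs, `(X a - X b) (X c - X d) ∂_ab ∂_cd P = P - (a b) P - (c d) P + (a b)(c d) P`,
which is symmetric in the two pairs because disjoint transpositions commute. For the braid
relation, `(X a - X b) (X b - X c) (X a - X c) ∂_ab ∂_bc ∂_ab P = ∑_{w ∈ S₃} sgn(w) w P`; the
relabelling `a ↔ c`, which turns `∂_ab, ∂_bc` into `-∂_bc, -∂_ab` and negates the Vandermonde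
factor, carries this to the same identity for `∂_bc ∂_ab ∂_bc`.
-/

open MvPolynomial

/-- `s_i(P)`: the polynomial obtained from `P` by exchanging the variables `x_i` and
`x_{i+1}` (0-based: exchanges `X ⟨i⟩` and `X ⟨i+1⟩`, i.e. the 1-based variables
`x_{i+1}, x_{i+2}`). -/
noncomputable def swapVars (n i : ℕ) (h : i + 1 < n) (P : MvPolynomial (Fin n) ℤ) :
    MvPolynomial (Fin n) ℤ :=
  rename (Equiv.swap ⟨i, by omega⟩ ⟨i + 1, h⟩) P

/-- `IsDDiff n i h P D` says that `D` is the divided difference `∂_i(P)`, i.e.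
`(x_i - x_{i+1}) · D = P - s_i(P)` (the quotient is unique since `ℤ[x]` is a domain). -/
def IsDDiff (n i : ℕ) (h : i + 1 < n) (P D : MvPolynomial (Fin n) ℤ) : Prop :=
  (X (⟨i, by omega⟩ : Fin n) - X ⟨i + 1, h⟩) * D = P - swapVars n i h P

open Equiv

namespace MvPolynomial

variable {σ R : Type*} [CommRing R]

theorem X_sub_X_ne_zero [Nontrivial R] {a b : σ} (hab : a ≠ b) :
    (X a - X b : MvPolynomial σ R) ≠ 0 :=
  sub_ne_zero.mpr fun h => hab (X_injective h)

variable [DecidableEq σ]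

theorem rename_swap_rename_swap (a b : σ) (P : MvPolynomial σ R) :
    rename (swap a b) (rename (swap a b) P) = P := by
  rw [rename_rename, ← Perm.coe_mul, swap_mul_self, Perm.coe_one, rename_id_apply]

theorem rename_swap_conj (a b c d : σ) (P : MvPolynomial σ R) :
    rename (swap a b) (rename (swap c d) (rename (swap a b) P)) =
      rename (swap (swap a b c) (swap a b d)) P := by
  rw [rename_rename, rename_rename, swap_apply_apply, swap_inv, ← Perm.coe_mul, ← Perm.coe_mul]

theorem rename_swap_comm {a b c d : σ} (hca : c ≠ a) (hcb : c ≠ b) (hda : d ≠ a) (hdb : d ≠ b)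
    (P : MvPolynomial σ R) :
    rename (swap a b) (rename (swap c d) P) = rename (swap c d) (rename (swap a b) P) := by
  calc rename (swap a b) (rename (swap c d) P)
      = rename (swap a b) (rename (swap c d) (rename (swap a b) (rename (swap a b) P))) := by
        rw [rename_swap_rename_swap]
    _ = rename (swap c d) (rename (swap a b) P) := by
        rw [rename_swap_conj, swap_apply_of_ne_of_ne hca hcb, swap_apply_of_ne_of_ne hda hdb]

def IsDivDiff (a b : σ) (P D : MvPolynomial σ R) : Prop :=
  (X a - X b) * D = P - rename (swap a b) P

/-- `∑_{w ∈ S₃} sgn(w) w P` for the symmetric group on `{a, b, c}`. -/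
noncomputable def swapAltSum (a b c : σ) (P : MvPolynomial σ R) : MvPolynomial σ R :=
  P - rename (swap a b) P - rename (swap b c) P - rename (swap a c) P +
    rename (swap a b) (rename (swap b c) P) + rename (swap b c) (rename (swap a b) P)

theorem swapAltSum_comm (a b c : σ) (P : MvPolynomial σ R) :
    swapAltSum c b a P = swapAltSum a b c P := by
  simp only [swapAltSum, swap_comm c b, swap_comm b a, swap_comm c a]
  abel

namespace IsDivDiff

variable {a b c d : σ} {P D : MvPolynomial σ R}

theorem symm (h : IsDivDiff a b P D) : IsDivDiff b a P (-D) := by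
  unfold IsDivDiff at *
  rw [swap_comm]
  linear_combination h

theorem neg_symm (h : IsDivDiff a b P D) : IsDivDiff b a (-P) D := by
  unfold IsDivDiff at *
  rw [swap_comm, map_neg]
  linear_combination -h

variable {A B C₁ C₂ : MvPolynomial σ R}

theorem comp_mul_eq_of_disjoint (hca : c ≠ a) (hcb : c ≠ b) (hda : d ≠ a) (hdb : d ≠ b)
    (h₁ : IsDivDiff c d P A) (h₂ : IsDivDiff a b A B) :
    (X a - X b) * (X c - X d) * B = P - rename (swap c d) P - rename (swap a b) P +
      rename (swap a b) (rename (swap c d) P) := by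
  have hs := congrArg (rename (swap a b)) h₁
  simp only [map_mul, map_sub, rename_X, swap_apply_of_ne_of_ne hca hcb,
    swap_apply_of_ne_of_ne hda hdb] at hs
  unfold IsDivDiff at h₁ h₂
  linear_combination (X c - X d) * h₂ + h₁ - hs

theorem comp_mul_eq (hab : a ≠ b) (hac : a ≠ c) (h₁ : IsDivDiff a b P C₁)
    (h₂ : IsDivDiff b c C₁ C₂) :
    (X a - X b) * (X b - X c) * (X a - X c) * C₂ = (X a - X c) * (P - rename (swap a b) P) -
      (X a - X b) * (rename (swap b c) P - rename (swap b c) (rename (swap a b) P)) := by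
  have ht := congrArg (rename (swap b c)) h₁
  simp only [map_mul, map_sub, rename_X, swap_apply_of_ne_of_ne hab hac, swap_apply_left] at ht
  unfold IsDivDiff at h₁ h₂
  linear_combination (X a - X b) * (X a - X c) * h₂ + (X a - X c) * h₁ - (X a - X b) * ht

variable [IsDomain R]

theorem unique {D' : MvPolynomial σ R} (hab : a ≠ b) (h : IsDivDiff a b P D)
    (h' : IsDivDiff a b P D') : D = D' :=
  mul_left_cancel₀ (X_sub_X_ne_zero hab) (h.trans (Eq.symm h'))

theorem rename_swap_eq (hab : a ≠ b) (h : IsDivDiff a b P D) : rename (swap a b) D = D := by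
  have hs := congrArg (rename (swap a b)) h
  simp only [map_mul, map_sub, rename_X, swap_apply_left, swap_apply_right,
    rename_swap_rename_swap] at hs
  refine unique hab ?_ h
  unfold IsDivDiff
  linear_combination -hs

theorem twice_eq_zero {E : MvPolynomial σ R} (hab : a ≠ b) (h : IsDivDiff a b P D)
    (h' : IsDivDiff a b D E) : E = 0 := by
  refine unique hab h' ?_
  rw [IsDivDiff, h.rename_swap_eq hab]
  ring

theorem comm_of_disjoint {A' B' : MvPolynomial σ R} (hab : a ≠ b) (hcd : c ≠ d) (hca : c ≠ a)
    (hcb : c ≠ b) (hda : d ≠ a) (hdb : d ≠ b) (h₁ : IsDivDiff c d P A) (h₂ : IsDivDiff a b A B)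
    (h₃ : IsDivDiff a b P A') (h₄ : IsDivDiff c d A' B') : B = B' := by
  refine mul_left_cancel₀ (mul_ne_zero (X_sub_X_ne_zero hab) (X_sub_X_ne_zero hcd)) ?_
  rw [comp_mul_eq_of_disjoint hca hcb hda hdb h₁ h₂, mul_comm (X a - X b),
    comp_mul_eq_of_disjoint hca.symm hda.symm hcb.symm hdb.symm h₃ h₄,
    rename_swap_comm hca hcb hda hdb]
  abel

theorem braid_mul_eq {C₃ : MvPolynomial σ R} (hab : a ≠ b) (hbc : b ≠ c) (hac : a ≠ c)
    (h₁ : IsDivDiff a b P C₁) (h₂ : IsDivDiff b c C₁ C₂) (h₃ : IsDivDiff a b C₂ C₃) :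
    (X a - X b) * (X b - X c) * (X a - X c) * C₃ = swapAltSum a b c P := by
  have h₁₂ := comp_mul_eq hab hac h₁ h₂
  have hs := congrArg (rename (swap a b)) h₁₂
  simp only [map_mul, map_sub, rename_X, swap_apply_left, swap_apply_right,
    swap_apply_of_ne_of_ne hac.symm hbc.symm, rename_swap_rename_swap, rename_swap_conj] at hs
  refine mul_left_cancel₀ (X_sub_X_ne_zero hab) ?_
  unfold IsDivDiff at h₃
  unfold swapAltSum
  linear_combination (X a - X b) * (X b - X c) * (X a - X c) * h₃ + h₁₂ + hs

theorem braid {C₃ D₁ D₂ D₃ : MvPolynomial σ R} (hab : a ≠ b) (hbc : b ≠ c) (hac : a ≠ c)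
    (h₁ : IsDivDiff a b P C₁) (h₂ : IsDivDiff b c C₁ C₂) (h₃ : IsDivDiff a b C₂ C₃)
    (h₄ : IsDivDiff b c P D₁) (h₅ : IsDivDiff a b D₁ D₂) (h₆ : IsDivDiff b c D₂ D₃) :
    C₃ = D₃ := by
  have hC := braid_mul_eq hab hbc hac h₁ h₂ h₃
  have hD := braid_mul_eq hbc.symm hab.symm hac.symm h₄.symm h₅.neg_symm h₆.symm
  refine mul_left_cancel₀ (mul_ne_zero (mul_ne_zero (X_sub_X_ne_zero hab)
    (X_sub_X_ne_zero hbc)) (X_sub_X_ne_zero hac)) ?_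
  rw [hC, ← swapAltSum_comm, ← hD]
  ring

end IsDivDiff

end MvPolynomial

open MvPolynomial.IsDivDiff in
/-- Relations for divided difference operators on `ℤ[x_1, …, x_n]`:
(a) `∂_i ∘ ∂_j = ∂_j ∘ ∂_i` for `|i - j| > 1`;
(b) `∂_i ∘ ∂_{i+1} ∘ ∂_i = ∂_{i+1} ∘ ∂_i ∘ ∂_{i+1}`;
(c) `∂_i ∘ ∂_i = 0`.
Each `∂` is encoded by its defining relation `IsDDiff`. -/
theorem ddiff_relations (n : ℕ) :
    -- (a) commutation: ∂_i (∂_j P) = ∂_j (∂_i P) when |i - j| > 1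
    (∀ (i j : ℕ) (hi : i + 1 < n) (hj : j + 1 < n), (i + 1 < j ∨ j + 1 < i) →
      ∀ P A B A' B' : MvPolynomial (Fin n) ℤ,
        IsDDiff n j hj P A → IsDDiff n i hi A B →
        IsDDiff n i hi P A' → IsDDiff n j hj A' B' → B = B') ∧
    -- (b) braid: ∂_i (∂_{i+1} (∂_i P)) = ∂_{i+1} (∂_i (∂_{i+1} P))
    (∀ (i : ℕ) (hi : i + 2 < n),
      ∀ P C₁ C₂ C₃ D₁ D₂ D₃ : MvPolynomial (Fin n) ℤ,
        IsDDiff n i (by omega) P C₁ → IsDDiff n (i + 1) hi C₁ C₂ →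
          IsDDiff n i (by omega) C₂ C₃ →
        IsDDiff n (i + 1) hi P D₁ → IsDDiff n i (by omega) D₁ D₂ →
          IsDDiff n (i + 1) hi D₂ D₃ →
        C₃ = D₃) ∧
    -- (c) ∂_i (∂_i P) = 0
    (∀ (i : ℕ) (hi : i + 1 < n), ∀ P A B : MvPolynomial (Fin n) ℤ,
      IsDDiff n i hi P A → IsDDiff n i hi A B → B = 0) := by
  have ne {k l : ℕ} (hk : k < n) (hl : l < n) (hkl : k ≠ l) : (⟨k, hk⟩ : Fin n) ≠ ⟨l, hl⟩ :=
    Fin.ne_of_val_ne hkl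
  refine ⟨?_, ?_, ?_⟩
  · intro i j hi hj hij P A B A' B' h₁ h₂ h₃ h₄
    exact comm_of_disjoint (ne _ _ (by omega)) (ne _ _ (by omega)) (ne _ _ (by omega))
      (ne _ _ (by omega)) (ne _ _ (by omega)) (ne _ _ (by omega)) h₁ h₂ h₃ h₄
  · intro i hi P C₁ C₂ C₃ D₁ D₂ D₃ h₁ h₂ h₃ h₄ h₅ h₆
    exact braid (ne _ _ (by omega)) (ne _ _ (by omega)) (ne _ _ (by omega)) h₁ h₂ h₃ h₄ h₅ h₆
  · intro i hi P A B h₁ h₂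
    exact twice_eq_zero (ne _ _ (by omega)) h₁ h₂
end
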